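/- arXiv:1906.01092 — 5 statements merged into one kernel-verified Lean document; each statement's English description precedes it below -/
import Mathlib

section
/- Let t ≥ 4 and n > t be integers, let p ∈ (0,1), let G ~ G(n,p) be an Erdős–Rényi random graph, and fix a set S of t vertices. Then the probability that both of the following events hold simultaneously — (i) at most t²/10 pairs of distinct vertices of S have a common neighbor (in G) outside S, and (ii) there exists a reachable subgraph H of G in which S is an independent set — is at most (1−p)^{t²/4}. -/
open MeasureTheory

/-- The Erdős–Rényi random graph model `G(n, p)` on `n` labeled vertices: a sample point
assigns to each unordered pair of vertices a Boolean, each pair being included as an edge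
independently with probability `p` (truncated to `[0, 1]`). -/
noncomputable def erMeasure (n : ℕ) (p : ℝ) : Measure (Sym2 (Fin n) → Bool) :=
  Measure.pi fun _ => (PMF.bernoulli (min (Real.toNNReal p) 1) (min_le_right _ _)).toMeasure

/-- The simple graph determined by a sample point of the Erdős–Rényi model:
`u` is adjacent to `v` iff `u ≠ v` and the pair `s(u, v)` was chosen as an edge. -/
def graphOf {n : ℕ} (ω : Sym2 (Fin n) → Bool) : SimpleGraph (Fin n) where
  Adj u v := u ≠ v ∧ ω s(u, v) = true
  symm := ⟨fun u v h => ⟨h.1.symm, by rw [Sym2.eq_swap]; exact h.2⟩⟩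
  loopless := ⟨fun u h => h.1 rfl⟩

open scoped Classical in
/-- The number of (unordered) pairs of distinct vertices of `S` that have a common
neighbor outside `S` in the graph `graphOf ω`. -/
noncomputable def commonNbrPairCount {n : ℕ} (ω : Sym2 (Fin n) → Bool)
    (S : Finset (Fin n)) : ℕ :=
  (Finset.univ.filter fun e : Sym2 (Fin n) =>
    ¬ e.IsDiag ∧ (∀ x ∈ e, x ∈ S) ∧
      ∃ w : Fin n, w ∉ S ∧ ∀ x ∈ e, (graphOf ω).Adj x w).card

/-- `H` is a *reachable subgraph* of `G`: a spanning subgraph (every edge of `H` is an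
edge of `G`) such that every edge of `G` not in `H` is the third edge of a triangle whose
other two edges lie in `H`. -/
def IsReachableSubgraph {V : Type*} (G H : SimpleGraph V) : Prop :=
  H ≤ G ∧ ∀ u v : V, G.Adj u v → ¬ H.Adj u v → ∃ w : V, H.Adj u w ∧ H.Adj v w

-- AUX
open scoped Classical in
noncomputable def pairsFinset {n : ℕ} (ω : Sym2 (Fin n) → Bool)
    (S : Finset (Fin n)) : Finset (Sym2 (Fin n)) :=
  Finset.univ.filter fun e : Sym2 (Fin n) =>
    ¬ e.IsDiag ∧ (∀ x ∈ e, x ∈ S) ∧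
      ∃ w : Fin n, w ∉ S ∧ ∀ x ∈ e, (graphOf ω).Adj x w

lemma commonNbrPairCount_eq {n : ℕ} (ω : Sym2 (Fin n) → Bool) (S : Finset (Fin n)) :
    commonNbrPairCount ω S = (pairsFinset ω S).card := rfl

def InsideP {n : ℕ} (S : Finset (Fin n)) (e : Sym2 (Fin n)) : Prop :=
  ¬ e.IsDiag ∧ ∀ x ∈ e, x ∈ S

open scoped Classical in
noncomputable def insideFinset {n : ℕ} (S : Finset (Fin n)) : Finset (Sym2 (Fin n)) :=
  Finset.univ.filter (InsideP S)

open scoped Classical in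
lemma insideFinset_card {n : ℕ} (S : Finset (Fin n)) :
    (insideFinset S).card = S.card.choose 2 := by
  have : insideFinset S = S.offDiag.image Sym2.mk.uncurry := by
    ext e
    induction e with
    | _ a b =>
      simp only [insideFinset, Finset.mem_filter, Finset.mem_univ, true_and, InsideP,
        Finset.mem_image, Finset.mem_offDiag, Sym2.isDiag_iff_proj_eq, Sym2.mem_iff]
      constructor
      · rintro ⟨hne, hmem⟩
        exact ⟨(a, b), ⟨hmem a (Or.inl rfl), hmem b (Or.inr rfl), hne⟩, rfl⟩
      · rintro ⟨⟨x, y⟩, ⟨hx, hy, hxy⟩, h⟩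
        have h2 : s(x, y) = s(a, b) := h
        rw [Sym2.eq_iff] at h2
        rcases h2 with ⟨rfl, rfl⟩ | ⟨rfl, rfl⟩
        · exact ⟨hxy, by rintro z (rfl | rfl) <;> assumption⟩
        · exact ⟨fun hh => hxy hh.symm, by rintro z (rfl | rfl) <;> assumption⟩
  rw [this, Sym2.card_image_offDiag]

lemma pairsFinset_subset {n : ℕ} (ω : Sym2 (Fin n) → Bool) (S : Finset (Fin n)) :
    pairsFinset ω S ⊆ insideFinset S := by
  classical
  intro e he
  simp only [pairsFinset, Finset.mem_filter] at he
  simp only [insideFinset, Finset.mem_filter, Finset.mem_univ, true_and, InsideP]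
  exact ⟨he.2.1, he.2.2.1⟩

/-- pairsFinset depends only on non-inside coordinates. -/
lemma pairsFinset_congr {n : ℕ} {ω ω' : Sym2 (Fin n) → Bool} (S : Finset (Fin n))
    (h : ∀ e, ¬ InsideP S e → ω e = ω' e) : pairsFinset ω S = pairsFinset ω' S := by
  classical
  have key : ∀ (ω₁ ω₂ : Sym2 (Fin n) → Bool), (∀ e, ¬ InsideP S e → ω₁ e = ω₂ e) →
      pairsFinset ω₁ S ⊆ pairsFinset ω₂ S := by
    intro ω₁ ω₂ hc e he
    simp only [pairsFinset, Finset.mem_filter, Finset.mem_univ, true_and] at he ⊢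
    obtain ⟨hd, hm, w, hw, hadj⟩ := he
    refine ⟨hd, hm, w, hw, fun x hx => ?_⟩
    obtain ⟨hxw, hωe⟩ := hadj x hx
    refine ⟨hxw, ?_⟩
    rw [← hc s(x, w) ?_]
    · exact hωe
    · intro hin
      exact hw (hin.2 w (by simp))
  exact Finset.Subset.antisymm (key ω ω' h) (key ω' ω fun e he => (h e he).symm)

/-- In the event, every edge inside S belongs to pairsFinset. -/
lemma inside_edge_mem_pairs {n : ℕ} {ω : Sym2 (Fin n) → Bool} {S : Finset (Fin n)}
    (hev : ∃ H : SimpleGraph (Fin n), IsReachableSubgraph (graphOf ω) H ∧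
      ∀ u ∈ S, ∀ v ∈ S, ¬ H.Adj u v)
    {e : Sym2 (Fin n)} (hin : InsideP S e) (htrue : ω e = true) :
    e ∈ pairsFinset ω S := by
  classical
  obtain ⟨H, ⟨hle, hreach⟩, hindep⟩ := hev
  induction e with
  | _ u v =>
    obtain ⟨hd, hm⟩ := hin
    have huv : u ≠ v := fun h => hd (by simp [Sym2.isDiag_iff_proj_eq, h])
    have hu : u ∈ S := hm u (by simp)
    have hv : v ∈ S := hm v (by simp)
    have hG : (graphOf ω).Adj u v := ⟨huv, htrue⟩
    have hH : ¬ H.Adj u v := hindep u hu v hv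
    obtain ⟨w, hw1, hw2⟩ := hreach u v hG hH
    have hwS : w ∉ S := fun hwS => hindep u hu w hwS hw1
    simp only [pairsFinset, Finset.mem_filter, Finset.mem_univ, true_and]
    refine ⟨hd, hm, w, hwS, ?_⟩
    intro x hx
    rw [Sym2.mem_iff] at hx
    rcases hx with rfl | rfl
    · exact hle hw1
    · exact hle hw2

lemma arith_bound {t : ℕ} (ht : 4 ≤ t) {k : ℕ} (hk : (k : ℝ) ≤ (t : ℝ) ^ 2 / 10) :
    (t : ℝ) ^ 2 / 4 ≤ (t.choose 2 : ℝ) - (k : ℝ) := by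
  have h2 : (t.choose 2 : ℝ) = t * (t - 1) / 2 := Nat.cast_choose_two ℝ t
  have ht' : (4 : ℝ) ≤ t := by exact_mod_cast ht
  nlinarith [sq_nonneg ((t : ℝ) - 4)]


/-- Fix a set `S` of `t ≥ 4` vertices, and let `G ~ G(n, p)` with `0 < p < 1`. The
probability that simultaneously (i) at most `t²/10` pairs of distinct vertices of `S`
have a common neighbor outside `S`, and (ii) some reachable subgraph of `G` has `S` as an
independent set, is at most `(1 - p)^(t²/4)`. -/
theorem reachable_indep_probability_bound (t n : ℕ) (ht : 4 ≤ t) (hn : t < n)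
    (p : ℝ) (hp0 : 0 < p) (hp1 : p < 1) (S : Finset (Fin n)) (hS : S.card = t) :
    erMeasure n p
      {ω | (commonNbrPairCount ω S : ℝ) ≤ (t : ℝ) ^ 2 / 10 ∧
        ∃ H : SimpleGraph (Fin n), IsReachableSubgraph (graphOf ω) H ∧
          ∀ u ∈ S, ∀ v ∈ S, ¬ H.Adj u v} ≤
      ENNReal.ofReal ((1 - p) ^ ((t : ℝ) ^ 2 / 4)) := by
  classical
  set A : Set (Sym2 (Fin n) → Bool) := {ω | (commonNbrPairCount ω S : ℝ) ≤ (t : ℝ) ^ 2 / 10 ∧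
        ∃ H : SimpleGraph (Fin n), IsReachableSubgraph (graphOf ω) H ∧
          ∀ u ∈ S, ∀ v ∈ S, ¬ H.Adj u v} with hA
  set C := ENNReal.ofReal ((1 - p) ^ ((t : ℝ) ^ 2 / 4)) with hC
  set μ1 : Measure Bool :=
    (PMF.bernoulli (min (Real.toNNReal p) 1) (min_le_right _ _)).toMeasure with hμ1
  have hprob1 : IsProbabilityMeasure μ1 := PMF.toMeasure.isProbabilityMeasure _
  -- value of μ1 on {false}
  have hfalse : μ1 {false} = ENNReal.ofReal (1 - p) := by
    rw [hμ1, PMF.toMeasure_apply_singleton _ _ (measurableSet_singleton _),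
      PMF.bernoulli_apply]
    have hmin : min (Real.toNNReal p) 1 = Real.toNNReal p :=
      min_eq_left (Real.toNNReal_le_one.mpr hp1.le)
    simp only [Bool.cond_false, hmin]
    rw [ENNReal.ofReal_sub _ hp0.le, ENNReal.ofReal_one]
    rw [ENNReal.coe_sub, ENNReal.coe_one]; rfl
  set P : Sym2 (Fin n) → Prop := fun e => ¬ InsideP S e with hP
  set f := MeasurableEquiv.piEquivPiSubtypeProd (fun _ : Sym2 (Fin n) => Bool) P with hf
  have hmp := measurePreserving_piEquivPiSubtypeProd (fun _ : Sym2 (Fin n) => μ1) P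
  set ν := Measure.pi fun _ : {e // ¬ P e} => μ1 with hν
  set μo := Measure.pi fun _ : Subtype P => μ1 with hμo
  have hprobo : IsProbabilityMeasure μo := by rw [hμo]; infer_instance
  set B : Set _ := ⇑f.symm ⁻¹' A with hB
  have hBmeas : MeasurableSet B := B.to_countable.measurableSet
  have h1 : erMeasure n p A = (μo.prod ν) B := by
    have hAB : A = ⇑f ⁻¹' B := by
      rw [hB, ← Set.preimage_comp]
      ext ω
      simp
    rw [hAB]
    exact hmp.measure_preimage hBmeas.nullMeasurableSet
  rw [h1, Measure.prod_apply hBmeas]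
  -- pointwise slice bound
  have hslice : ∀ x : (Subtype P) → Bool, ν (Prod.mk x ⁻¹' B) ≤ C := by
    intro x
    set ω₀ : Sym2 (Fin n) → Bool := f.symm (x, fun _ => false) with hω₀
    -- agreement of any f.symm (x, y) with ω₀ off the inside coordinates
    have hagree : ∀ (y : {e // ¬ P e} → Bool) (e : Sym2 (Fin n)), ¬ InsideP S e →
        f.symm (x, y) e = ω₀ e := by
      intro y e he
      have hPe : P e := he
      rw [hω₀, hf]
      show (Equiv.piEquivPiSubtypeProd P (fun _ => Bool)).symm (x, y) e =
        (Equiv.piEquivPiSubtypeProd P (fun _ => Bool)).symm (x, fun _ => false) e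
      rw [Equiv.piEquivPiSubtypeProd_symm_apply, Equiv.piEquivPiSubtypeProd_symm_apply,
        dif_pos hPe, dif_pos hPe]
    have hPairs : ∀ y : {e // ¬ P e} → Bool,
        pairsFinset (f.symm (x, y)) S = pairsFinset ω₀ S := fun y =>
      pairsFinset_congr S (hagree y)
    by_cases hgood : (commonNbrPairCount ω₀ S : ℝ) ≤ (t : ℝ) ^ 2 / 10
    · -- good case
      set R := insideFinset S \ pairsFinset ω₀ S with hR
      have hsub := pairsFinset_subset ω₀ S
      have hcard : R.card = t.choose 2 - (pairsFinset ω₀ S).card := by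
        rw [hR, Finset.card_sdiff_of_subset hsub, insideFinset_card, hS]
      have hcle : (pairsFinset ω₀ S).card ≤ t.choose 2 := by
        calc (pairsFinset ω₀ S).card ≤ (insideFinset S).card := Finset.card_le_card hsub
          _ = t.choose 2 := by rw [insideFinset_card, hS]
      have hRcard : (t : ℝ) ^ 2 / 4 ≤ (R.card : ℝ) := by
        rw [hcard]
        rw [Nat.cast_sub hcle]
        exact arith_bound ht hgood
      -- the slice is contained in "all R-coordinates are false"
      have hsub2 : Prod.mk x ⁻¹' B ⊆
          {y : {e // ¬ P e} → Bool | ∀ e : {e // ¬ P e}, (e : Sym2 (Fin n)) ∈ R → y e = false} := by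
        intro y hy
        have hyA : f.symm (x, y) ∈ A := hy
        intro e heR
        rw [hR, Finset.mem_sdiff] at heR
        obtain ⟨hein, henot⟩ := heR
        have hinP : InsideP S (e : Sym2 (Fin n)) := by
          have := hein
          simp only [insideFinset, Finset.mem_filter] at this
          exact this.2
        by_contra hyt
        have hyt' : y e = true := by
          cases h : y e
          · exact absurd h hyt
          · rfl
        have hωe : f.symm (x, y) (e : Sym2 (Fin n)) = true := by
          rw [hf]
          show (Equiv.piEquivPiSubtypeProd P (fun _ => Bool)).symm (x, y) (e : Sym2 (Fin n)) = true
          rw [Equiv.piEquivPiSubtypeProd_symm_apply, dif_neg e.2]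
          rw [Subtype.eta]
          exact hyt'
        have := inside_edge_mem_pairs hyA.2 hinP hωe
        rw [hPairs y] at this
        exact henot this
      refine le_trans (measure_mono hsub2) ?_
      -- compute the measure of the superset
      have heq : {y : {e // ¬ P e} → Bool | ∀ e : {e // ¬ P e}, (e : Sym2 (Fin n)) ∈ R → y e = false}
          = Set.univ.pi (fun e : {e // ¬ P e} =>
              if (e : Sym2 (Fin n)) ∈ R then ({false} : Set Bool) else Set.univ) := by
        ext y
        simp only [Set.mem_setOf_eq, Set.mem_pi, Set.mem_univ, forall_true_left]
        constructor
        · intro h e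
          by_cases he : (e : Sym2 (Fin n)) ∈ R
          · rw [if_pos he]; exact h e he
          · rw [if_neg he]; trivial
        · intro h e he
          have := h e
          rw [if_pos he] at this
          exact this
      rw [heq, hν, Measure.pi_pi]
      have hval : ∀ e : {e // ¬ P e},
          μ1 (if (e : Sym2 (Fin n)) ∈ R then ({false} : Set Bool) else Set.univ)
            = if (e : Sym2 (Fin n)) ∈ R then ENNReal.ofReal (1 - p) else 1 := by
        intro e
        by_cases he : (e : Sym2 (Fin n)) ∈ R
        · rw [if_pos he, if_pos he, hfalse]
        · rw [if_neg he, if_neg he, measure_univ]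
      rw [Finset.prod_congr rfl (fun e _ => hval e), Finset.prod_ite, Finset.prod_const,
        Finset.prod_const, one_pow, mul_one]
      have hcard2 : (Finset.univ.filter fun e : {e // ¬ P e} => (e : Sym2 (Fin n)) ∈ R).card
          = R.card := by
        have himg : (Finset.univ.filter fun e : {e // ¬ P e} =>
            (e : Sym2 (Fin n)) ∈ R).image Subtype.val = R := by
          ext b
          simp only [Finset.mem_image, Finset.mem_filter, Finset.mem_univ, true_and]
          constructor
          · rintro ⟨e, he, rfl⟩; exact he
          · intro hb
            have hbin : InsideP S b := by
              have : b ∈ insideFinset S := (Finset.mem_sdiff.mp hb).1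
              simp only [insideFinset, Finset.mem_filter] at this
              exact this.2
            exact ⟨⟨b, fun hnb => hnb hbin⟩, hb, rfl⟩
        conv_rhs => rw [← himg]
        rw [Finset.card_image_of_injective _ Subtype.val_injective]
      rw [hcard2]
      -- final numeric bound
      rw [hC, ← ENNReal.ofReal_pow (by linarith : (0:ℝ) ≤ 1 - p)]
      apply ENNReal.ofReal_le_ofReal
      calc (1 - p) ^ R.card = (1 - p) ^ ((R.card : ℝ)) := (Real.rpow_natCast _ _).symm
        _ ≤ (1 - p) ^ ((t : ℝ) ^ 2 / 4) :=
          Real.rpow_le_rpow_of_exponent_ge (by linarith) (by linarith) hRcard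
    · -- bad case: the slice is empty
      have : Prod.mk x ⁻¹' B = ∅ := by
        ext y
        simp only [Set.mem_preimage, Set.mem_empty_iff_false, iff_false]
        intro hy
        have hyA : f.symm (x, y) ∈ A := hy
        apply hgood
        have : commonNbrPairCount (f.symm (x, y)) S = commonNbrPairCount ω₀ S := by
          rw [commonNbrPairCount_eq, commonNbrPairCount_eq, hPairs y]
        rw [← this]
        exact hyA.1
      rw [this]
      simp
  calc ∫⁻ x, ν (Prod.mk x ⁻¹' B) ∂μo ≤ ∫⁻ _, C ∂μo := lintegral_mono hslice
    _ = C := by rw [lintegral_const, measure_univ, mul_one]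
end

section
/- Suppose 0 = Z₀, Z₁, …, Z_m is a martingale (with respect to some filtration) such that for all 0 ≤ i < m, almost surely Z_i − c₁ ≤ Z_{i+1} ≤ Z_i + c₂, where 0 < c₁ ≤ c₂/10 are constants. Then for every real λ with 0 < λ < m·c₁, we have P[|Z_m| ≥ λ] ≤ 2·exp(−λ²/(3·c₁·c₂·m)). -/
open MeasureTheory

lemma exp_quad_aux {x : ℝ} (hx : |x| ≤ 1) : Real.exp x ≤ 1 + x + 3/4 * x ^ 2 := by
  have h := Real.exp_bound hx (n := 2) (by norm_num)
  have h2 : ∑ m ∈ Finset.range 2, x ^ m / m.factorial = 1 + x := by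
    simp [Finset.sum_range_succ]
  rw [h2] at h
  norm_num [Nat.factorial] at h
  have h3 : |x| ^ 2 = x ^ 2 := sq_abs x
  have h4 := (abs_le.1 h).2
  nlinarith

lemma exp_seg_aux {c₁ c₂ d t : ℝ} (h1 : 0 < c₁) (h2 : 0 < c₂) (hd1 : -c₁ ≤ d) (hd2 : d ≤ c₂) :
    Real.exp (t * d) ≤ (c₂ * Real.exp (-(t*c₁)) + c₁ * Real.exp (t*c₂)) / (c₁+c₂)
       + (Real.exp (t*c₂) - Real.exp (-(t*c₁))) / (c₁+c₂) * d := by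
  have hcc : 0 < c₁ + c₂ := by linarith
  have ha : 0 ≤ (c₂ - d) / (c₁ + c₂) := div_nonneg (by linarith) hcc.le
  have hb : 0 ≤ (d + c₁) / (c₁ + c₂) := div_nonneg (by linarith) hcc.le
  have hab : (c₂ - d) / (c₁ + c₂) + (d + c₁) / (c₁ + c₂) = 1 := by field_simp; ring
  have h := convexOn_exp.2 (Set.mem_univ (-(t*c₁))) (Set.mem_univ (t*c₂)) ha hb hab
  simp only [smul_eq_mul] at h
  have harg : (c₂ - d) / (c₁ + c₂) * (-(t * c₁)) + (d + c₁) / (c₁ + c₂) * (t * c₂) = t * d := by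
    field_simp
    ring
  rw [harg] at h
  refine h.trans (le_of_eq ?_)
  field_simp
  ring

lemma K_le_aux {c₁ c₂ t : ℝ} (h1 : 0 < c₁) (h12 : c₁ ≤ c₂) (ht : |t| * c₂ ≤ 1) :
    (c₂ * Real.exp (-(t*c₁)) + c₁ * Real.exp (t*c₂)) / (c₁+c₂) ≤ 1 + 3/4 * t^2 * (c₁*c₂) := by
  have h2 : 0 < c₂ := lt_of_lt_of_le h1 h12
  have hcc : 0 < c₁ + c₂ := by linarith
  have htabs : 0 ≤ |t| := abs_nonneg t
  have htc2 : |t*c₂| ≤ 1 := by rwa [abs_mul, abs_of_pos h2]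
  have htc1 : |-(t*c₁)| ≤ 1 := by
    rw [abs_neg, abs_mul, abs_of_pos h1]
    calc |t| * c₁ ≤ |t| * c₂ := by nlinarith
      _ ≤ 1 := ht
  have e1 := exp_quad_aux htc1
  have e2 := exp_quad_aux htc2
  rw [div_le_iff₀ hcc]
  nlinarith [Real.exp_pos (t*c₂), Real.exp_pos (-(t*c₁)), sq_nonneg t]

lemma mgf_le_aux {Ω : Type*} {m0 : MeasurableSpace Ω} {μ : Measure Ω} [IsProbabilityMeasure μ]
    (ℱ : Filtration ℕ m0) (Z : ℕ → Ω → ℝ) (m : ℕ) (hmart : Martingale Z ℱ μ)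
    (hZ0 : ∀ᵐ ω ∂μ, Z 0 ω = 0) (c₁ c₂ : ℝ) (hc₁ : 0 < c₁) (h12 : c₁ ≤ c₂)
    (hbdd : ∀ i < m, ∀ᵐ ω ∂μ, Z i ω - c₁ ≤ Z (i + 1) ω ∧ Z (i + 1) ω ≤ Z i ω + c₂)
    (t : ℝ) (ht : |t| * c₂ ≤ 1) :
    Integrable (fun ω => Real.exp (t * Z m ω)) μ ∧
      ∫ ω, Real.exp (t * Z m ω) ∂μ ≤ (1 + 3/4 * t^2 * (c₁*c₂)) ^ m := by
  have hc₂ : 0 < c₂ := lt_of_lt_of_le hc₁ h12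
  set A : ℝ := (c₂ * Real.exp (-(t*c₁)) + c₁ * Real.exp (t*c₂)) / (c₁+c₂) with hA
  set B : ℝ := (Real.exp (t*c₂) - Real.exp (-(t*c₁))) / (c₁+c₂) with hB
  set K0 : ℝ := 1 + 3/4 * t^2 * (c₁*c₂) with hK0
  have hK0nn : 0 ≤ K0 := by positivity
  -- a.s. bound on |Z i|
  have habs : ∀ i, i ≤ m → ∀ᵐ ω ∂μ, |Z i ω| ≤ i * c₂ := by
    intro i
    induction i with
    | zero => intro _; filter_upwards [hZ0] with ω h; simp [h]
    | succ i ih =>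
      intro h
      filter_upwards [ih (by omega), hbdd i (by omega)] with ω h1 h2
      have := abs_le.1 h1
      rw [abs_le]
      push_cast
      constructor <;> nlinarith [this.1, this.2, h2.1, h2.2]
  -- measurability of exp(t Z i)
  have hf_sm : ∀ i, StronglyMeasurable[ℱ i] (fun ω => Real.exp (t * Z i ω)) := fun i =>
    Real.continuous_exp.comp_stronglyMeasurable (stronglyMeasurable_const.mul (hmart.stronglyAdapted i))
  have hexp_bd : ∀ i, i ≤ m → ∀ᵐ ω ∂μ, ‖Real.exp (t * Z i ω)‖ ≤ Real.exp (|t| * (i * c₂)) := by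
    intro i hi
    filter_upwards [habs i hi] with ω h
    rw [Real.norm_eq_abs, Real.abs_exp, Real.exp_le_exp]
    calc t * Z i ω ≤ |t * Z i ω| := le_abs_self _
      _ = |t| * |Z i ω| := abs_mul _ _
      _ ≤ |t| * (i * c₂) := by
          apply mul_le_mul_of_nonneg_left h (abs_nonneg t)
  have hint_exp : ∀ i, i ≤ m → Integrable (fun ω => Real.exp (t * Z i ω)) μ := fun i hi =>
    Integrable.mono' (integrable_const _) ((hf_sm i).mono (ℱ.le i)).aestronglyMeasurable
      (hexp_bd i hi)
  have hint_mul : ∀ i, i ≤ m → ∀ j, Integrable (fun ω => Real.exp (t * Z i ω) * Z j ω) μ :=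
    fun i hi j => Integrable.bdd_mul (hmart.integrable j)
      ((hf_sm i).mono (ℱ.le i)).aestronglyMeasurable (hexp_bd i hi)
  -- key: orthogonality
  have hkey : ∀ i, i < m →
      ∫ ω, Real.exp (t * Z i ω) * Z (i+1) ω ∂μ = ∫ ω, Real.exp (t * Z i ω) * Z i ω ∂μ := by
    intro i hi
    have hfg : Integrable ((fun ω => Real.exp (t * Z i ω)) * Z (i+1)) μ := hint_mul i hi.le (i+1)
    have hce := condExp_mul_of_stronglyMeasurable_left (hf_sm i) hfg (hmart.integrable (i+1))
    have hm2 : μ[Z (i+1)|ℱ i] =ᵐ[μ] Z i := hmart.condExp_ae_eq (Nat.le_succ i)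
    calc ∫ ω, Real.exp (t * Z i ω) * Z (i+1) ω ∂μ
        = ∫ ω, (μ[(fun ω => Real.exp (t * Z i ω)) * Z (i+1)|ℱ i]) ω ∂μ :=
          (integral_condExp (ℱ.le i)).symm
      _ = ∫ ω, Real.exp (t * Z i ω) * Z i ω ∂μ := by
          refine integral_congr_ae (hce.trans ?_)
          filter_upwards [hm2] with ω h
          simp only [Pi.mul_apply, h]
  -- step inequality
  have hstep : ∀ i, i < m →
      ∫ ω, Real.exp (t * Z (i+1) ω) ∂μ ≤ K0 * ∫ ω, Real.exp (t * Z i ω) ∂μ := by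
    intro i hi
    have hI1 : Integrable (fun ω => B * (Real.exp (t * Z i ω) * Z (i+1) ω)) μ :=
      (hint_mul i hi.le (i+1)).const_mul B
    have hI0 : Integrable (fun ω => B * (Real.exp (t * Z i ω) * Z i ω)) μ :=
      (hint_mul i hi.le i).const_mul B
    have hI : Integrable (fun ω => B * (Real.exp (t * Z i ω) * Z (i+1) ω)
        - B * (Real.exp (t * Z i ω) * Z i ω)) μ := hI1.sub hI0
    have hrhs_int : Integrable (fun ω => A * Real.exp (t * Z i ω)
        + (B * (Real.exp (t * Z i ω) * Z (i+1) ω) - B * (Real.exp (t * Z i ω) * Z i ω))) μ :=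
      ((hint_exp i hi.le).const_mul A).add hI
    have hle : ∀ᵐ ω ∂μ, Real.exp (t * Z (i+1) ω) ≤ A * Real.exp (t * Z i ω)
        + (B * (Real.exp (t * Z i ω) * Z (i+1) ω) - B * (Real.exp (t * Z i ω) * Z i ω)) := by
      filter_upwards [hbdd i hi] with ω h
      have hd1 : -c₁ ≤ Z (i+1) ω - Z i ω := by linarith [h.1]
      have hd2 : Z (i+1) ω - Z i ω ≤ c₂ := by linarith [h.2]
      have hseg := exp_seg_aux (t := t) hc₁ hc₂ hd1 hd2
      have hpos : (0:ℝ) < Real.exp (t * Z i ω) := Real.exp_pos _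
      have heq : Real.exp (t * Z (i+1) ω)
          = Real.exp (t * Z i ω) * Real.exp (t * (Z (i+1) ω - Z i ω)) := by
        rw [← Real.exp_add]; ring_nf
      rw [heq]
      calc Real.exp (t * Z i ω) * Real.exp (t * (Z (i+1) ω - Z i ω))
          ≤ Real.exp (t * Z i ω) * (A + B * (Z (i+1) ω - Z i ω)) := by
            exact mul_le_mul_of_nonneg_left hseg hpos.le
        _ = A * Real.exp (t * Z i ω)
            + (B * (Real.exp (t * Z i ω) * Z (i+1) ω) - B * (Real.exp (t * Z i ω) * Z i ω)) := by
            ring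
    calc ∫ ω, Real.exp (t * Z (i+1) ω) ∂μ
        ≤ ∫ ω, (A * Real.exp (t * Z i ω)
          + (B * (Real.exp (t * Z i ω) * Z (i+1) ω) - B * (Real.exp (t * Z i ω) * Z i ω))) ∂μ :=
          integral_mono_ae (hint_exp (i+1) hi) hrhs_int hle
      _ = A * ∫ ω, Real.exp (t * Z i ω) ∂μ
          + (B * ∫ ω, Real.exp (t * Z i ω) * Z (i+1) ω ∂μ
            - B * ∫ ω, Real.exp (t * Z i ω) * Z i ω ∂μ) := by
          rw [integral_add ((hint_exp i hi.le).const_mul A) hI, integral_sub hI1 hI0,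
            integral_const_mul, integral_const_mul, integral_const_mul]
      _ = A * ∫ ω, Real.exp (t * Z i ω) ∂μ := by rw [hkey i hi]; ring
      _ ≤ K0 * ∫ ω, Real.exp (t * Z i ω) ∂μ := by
          apply mul_le_mul_of_nonneg_right (K_le_aux hc₁ h12 ht)
          exact integral_nonneg fun ω => (Real.exp_pos _).le
  -- induction
  have main : ∀ i, i ≤ m → ∫ ω, Real.exp (t * Z i ω) ∂μ ≤ K0 ^ i := by
    intro i
    induction i with
    | zero =>
      intro _
      have : ∫ ω, Real.exp (t * Z 0 ω) ∂μ = 1 := by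
        rw [integral_congr_ae (g := fun _ => (1:ℝ)) (by filter_upwards [hZ0] with ω h; simp [h])]
        simp
      simp [this]
    | succ i ih =>
      intro h
      calc ∫ ω, Real.exp (t * Z (i+1) ω) ∂μ ≤ K0 * ∫ ω, Real.exp (t * Z i ω) ∂μ :=
            hstep i (by omega)
        _ ≤ K0 * K0 ^ i := mul_le_mul_of_nonneg_left (ih (by omega)) hK0nn
        _ = K0 ^ (i+1) := (pow_succ' K0 i).symm
  exact ⟨hint_exp m le_rfl, main m le_rfl⟩

/-- Bohman's martingale concentration inequality: if `Z₀ = 0, Z₁, …, Z_m` is a martingale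
whose differences satisfy `Z_i - c₁ ≤ Z_{i+1} ≤ Z_i + c₂` almost surely, where
`0 < c₁ ≤ c₂ / 10`, then for every `0 < λ < m·c₁` we have
`P[|Z_m| ≥ λ] ≤ 2 exp(-λ² / (3 c₁ c₂ m))`. -/
theorem martingale_asymmetric_concentration {Ω : Type*} {m0 : MeasurableSpace Ω}
    {μ : Measure Ω} [IsProbabilityMeasure μ] (ℱ : Filtration ℕ m0)
    (Z : ℕ → Ω → ℝ) (m : ℕ) (hmart : Martingale Z ℱ μ)
    (hZ0 : ∀ᵐ ω ∂μ, Z 0 ω = 0)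
    (c₁ c₂ : ℝ) (hc₁ : 0 < c₁) (hc₁c₂ : c₁ ≤ c₂ / 10)
    (hbdd : ∀ i < m, ∀ᵐ ω ∂μ, Z i ω - c₁ ≤ Z (i + 1) ω ∧ Z (i + 1) ω ≤ Z i ω + c₂)
    (lam : ℝ) (hlam : 0 < lam) (hlam' : lam < m * c₁) :
    μ {ω | lam ≤ |Z m ω|} ≤ ENNReal.ofReal (2 * Real.exp (-lam ^ 2 / (3 * c₁ * c₂ * m))) := by
  have h12 : c₁ ≤ c₂ := by linarith
  have hc₂ : 0 < c₂ := lt_of_lt_of_le hc₁ h12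
  have hmpos : 0 < (m : ℝ) := by nlinarith
  set t : ℝ := 2 * lam / (3 * (m : ℝ) * c₁ * c₂) with htdef
  have htpos : 0 < t := by positivity
  have ht : |t| * c₂ ≤ 1 := by
    rw [abs_of_pos htpos, htdef]
    rw [div_mul_eq_mul_div, div_le_one (by positivity)]
    nlinarith
  have ht' : |(-t)| * c₂ ≤ 1 := by rwa [abs_neg]
  -- the exponent identity
  have hexpo : ∀ s : ℝ, s^2 = t^2 →
      Real.exp (-(t * lam)) * Real.exp (3/4 * s^2 * (c₁*c₂) * m)
        = Real.exp (-lam ^ 2 / (3 * c₁ * c₂ * m)) := by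
    intro s hs
    rw [hs, ← Real.exp_add]
    congr 1
    rw [htdef]
    field_simp
    ring
  -- generic tail bound
  have tail : ∀ s : ℝ, |s| * c₂ ≤ 1 →
      μ {ω | Real.exp (t * lam) ≤ Real.exp (s * Z m ω)}
        ≤ ENNReal.ofReal (Real.exp (-(t * lam)) * Real.exp (3/4 * s^2 * (c₁*c₂) * m)) := by
    intro s hts
    obtain ⟨hint, hI⟩ := mgf_le_aux ℱ Z m hmart hZ0 c₁ c₂ hc₁ h12 hbdd s hts
    have hI2 : ∫ ω, Real.exp (s * Z m ω) ∂μ ≤ Real.exp (3/4 * s^2 * (c₁*c₂) * m) := by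
      refine hI.trans ?_
      have h1 : (1 : ℝ) + 3/4 * s^2 * (c₁*c₂) ≤ Real.exp (3/4 * s^2 * (c₁*c₂)) := by
        have := Real.add_one_le_exp (3/4 * s^2 * (c₁*c₂)); linarith
      calc (1 + 3/4 * s^2 * (c₁*c₂)) ^ m ≤ (Real.exp (3/4 * s^2 * (c₁*c₂))) ^ m := by
            apply pow_le_pow_left₀ (by positivity) h1
        _ = Real.exp (3/4 * s^2 * (c₁*c₂) * m) := by
            rw [← Real.exp_nat_mul]; ring_nf
    have hmarkov := mul_meas_ge_le_integral_of_nonneg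
      (ae_of_all μ fun ω => (Real.exp_pos (s * Z m ω)).le) hint (Real.exp (t * lam))
    set S := {ω | Real.exp (t * lam) ≤ Real.exp (s * Z m ω)} with hS
    have hSfin : μ S ≠ ⊤ := measure_ne_top μ S
    have hepos : 0 < Real.exp (t * lam) := Real.exp_pos _
    have h2 : (μ S).toReal ≤ Real.exp (-(t * lam)) * ∫ ω, Real.exp (s * Z m ω) ∂μ := by
      rw [Real.exp_neg]
      rw [← le_div_iff₀' hepos] at hmarkov
      rwa [div_eq_inv_mul] at hmarkov
    calc μ S = ENNReal.ofReal ((μ S).toReal) := (ENNReal.ofReal_toReal hSfin).symm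
      _ ≤ ENNReal.ofReal (Real.exp (-(t * lam)) * Real.exp (3/4 * s^2 * (c₁*c₂) * m)) := by
          apply ENNReal.ofReal_le_ofReal
          refine h2.trans ?_
          exact mul_le_mul_of_nonneg_left hI2 (Real.exp_pos _).le
  -- assemble
  have hsub : {ω | lam ≤ |Z m ω|} ⊆
      {ω | Real.exp (t * lam) ≤ Real.exp (t * Z m ω)}
      ∪ {ω | Real.exp (t * lam) ≤ Real.exp ((-t) * Z m ω)} := by
    intro ω hω
    simp only [Set.mem_setOf_eq] at hω
    rcases le_abs.1 hω with h | h
    · left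
      simp only [Set.mem_setOf_eq, Real.exp_le_exp]
      exact mul_le_mul_of_nonneg_left h htpos.le
    · right
      simp only [Set.mem_setOf_eq, Real.exp_le_exp, neg_mul]
      nlinarith
  have hE := hexpo t rfl
  have hE' := hexpo (-t) (by ring)
  calc μ {ω | lam ≤ |Z m ω|}
      ≤ μ ({ω | Real.exp (t * lam) ≤ Real.exp (t * Z m ω)}
        ∪ {ω | Real.exp (t * lam) ≤ Real.exp ((-t) * Z m ω)}) := measure_mono hsub
    _ ≤ μ {ω | Real.exp (t * lam) ≤ Real.exp (t * Z m ω)}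
        + μ {ω | Real.exp (t * lam) ≤ Real.exp ((-t) * Z m ω)} := measure_union_le _ _
    _ ≤ ENNReal.ofReal (Real.exp (-lam ^ 2 / (3 * c₁ * c₂ * m)))
        + ENNReal.ofReal (Real.exp (-lam ^ 2 / (3 * c₁ * c₂ * m))) := by
        gcongr
        · exact le_of_le_of_eq (tail t ht) (by rw [hE])
        · exact le_of_le_of_eq (tail (-t) ht') (by rw [hE'])
    _ = ENNReal.ofReal (2 * Real.exp (-lam ^ 2 / (3 * c₁ * c₂ * m))) := by
        rw [two_mul, ENNReal.ofReal_add (Real.exp_pos _).le (Real.exp_pos _).le]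
end

section
/- Let a ≤ b be positive integers, let ν = a + b, let m ≥ 1 be an integer, and let X₁, …, X_m be independent random variables each distributed as X_{a,b}. Let S_m = X₁ + ⋯ + X_m. Then for all real t with 0 < t < a/b, P[|S_m| ≥ tm/a] ≤ 2·exp(−m·ν·t²/(20·a)). -/
open MeasureTheory ProbabilityTheory

/-- The distribution of the mean-zero random variable `X_{a,b}`, which takes the value
`1/a` with probability `a/(a+b)` and the value `-1/b` with probability `b/(a+b)`. -/
noncomputable def xabMeasure (a b : ℕ) : Measure ℝ :=
  ((a : ENNReal) / ((a : ENNReal) + b)) • Measure.dirac ((a : ℝ)⁻¹) +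
    ((b : ENNReal) / ((a : ENNReal) + b)) • Measure.dirac (-(b : ℝ)⁻¹)

lemma xab_integrable_dirac {f : ℝ → ℝ} (hf : Measurable f) (x : ℝ) :
    Integrable f (Measure.dirac x) := by
  refine ⟨hf.aestronglyMeasurable, ?_⟩
  rw [HasFiniteIntegral, lintegral_dirac' _ hf.enorm]
  exact ENNReal.coe_lt_top

lemma xab_integrable {f : ℝ → ℝ} (hf : Measurable f) {a b : ℕ} (ha : 0 < a) (hb : 0 < b) :
    Integrable f (xabMeasure a b) := by
  unfold xabMeasure
  refine Integrable.add_measure ?_ ?_ <;>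
  · refine Integrable.smul_measure (xab_integrable_dirac hf _) ?_
    exact (ENNReal.div_lt_top (by simp) (by simp [ha.ne', hb.ne'])).ne

lemma xab_integral {f : ℝ → ℝ} (hf : Measurable f) {a b : ℕ} (ha : 0 < a) (hb : 0 < b) :
    ∫ x, f x ∂(xabMeasure a b)
      = (a : ℝ)/(a+b) * f ((a:ℝ)⁻¹) + (b : ℝ)/(a+b) * f (-(b:ℝ)⁻¹) := by
  unfold xabMeasure
  have hab : ((a : ENNReal) + b) ≠ 0 := by simp [ha.ne']
  rw [integral_add_measure
      ((xab_integrable_dirac hf _).smul_measure (ENNReal.div_lt_top (by simp) hab).ne)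
      ((xab_integrable_dirac hf _).smul_measure (ENNReal.div_lt_top (by simp) hab).ne),
    integral_smul_measure, integral_smul_measure, integral_dirac, integral_dirac]
  rw [ENNReal.toReal_div, ENNReal.toReal_div]
  rw [ENNReal.toReal_add (by simp) (by simp)]
  simp [smul_eq_mul]

lemma xab_exp_quad {x : ℝ} (hx : |x| ≤ 1) : Real.exp x ≤ 1 + x + 3/4 * x^2 := by
  have h := Real.exp_bound hx (n := 2) (by norm_num)
  have h2 : (∑ m ∈ Finset.range 2, x ^ m / m.factorial) = 1 + x := by
    simp [Finset.sum_range_succ]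
  rw [h2] at h
  norm_num at h
  have h3 := (abs_sub_le_iff.1 h).1
  nlinarith [sq_abs x]

lemma xab_mgf_bound {A B u : ℝ} (hA : 0 < A) (hAB : A ≤ B) (hu : |u| ≤ A) :
    A/(A+B) * Real.exp (u * A⁻¹) + B/(A+B) * Real.exp (u * -B⁻¹)
      ≤ Real.exp (3*u^2/(4*A*B)) := by
  have hB : 0 < B := hA.trans_le hAB
  have h1 : |u * A⁻¹| ≤ 1 := by
    rw [abs_mul, abs_inv, abs_of_pos hA]
    rw [mul_inv_le_iff₀ hA, one_mul]; exact hu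
  have h2 : |u * -B⁻¹| ≤ 1 := by
    rw [abs_mul, abs_neg, abs_inv, abs_of_pos hB]
    rw [mul_inv_le_iff₀ hB, one_mul]; exact hu.trans hAB
  have e1 := xab_exp_quad h1
  have e2 := xab_exp_quad h2
  have hp : (0:ℝ) < A/(A+B) := by positivity
  have hq : (0:ℝ) < B/(A+B) := by positivity
  calc A/(A+B) * Real.exp (u * A⁻¹) + B/(A+B) * Real.exp (u * -B⁻¹)
      ≤ A/(A+B) * (1 + u * A⁻¹ + 3/4 * (u * A⁻¹)^2)
        + B/(A+B) * (1 + u * -B⁻¹ + 3/4 * (u * -B⁻¹)^2) := by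
        gcongr
    _ = 3*u^2/(4*A*B) + 1 := by field_simp; ring
    _ ≤ Real.exp (3*u^2/(4*A*B)) := Real.add_one_le_exp _

/-- If `X₁, …, X_m` are independent random variables each distributed as `X_{a,b}`, where
`0 < a ≤ b` and `ν = a + b`, and `S_m = X₁ + ⋯ + X_m`, then for all `0 < t < a/b`,
`P[|S_m| ≥ t m / a] ≤ 2 exp(- m ν t² / (20 a))`. -/
theorem sum_xab_concentration {Ω : Type*} [MeasurableSpace Ω] (μ : Measure Ω)
    [IsProbabilityMeasure μ] (a b ν m : ℕ) (ha : 0 < a) (hab : a ≤ b) (hν : ν = a + b)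
    (hm : 1 ≤ m) (X : Fin m → Ω → ℝ) (hmeas : ∀ i, Measurable (X i))
    (hindep : iIndepFun X μ)
    (hdist : ∀ i, μ.map (X i) = xabMeasure a b)
    (t : ℝ) (ht : 0 < t) (ht' : t < (a : ℝ) / b) :
    μ {ω | t * m / a ≤ |∑ i, X i ω|} ≤
      ENNReal.ofReal (2 * Real.exp (-((m : ℝ) * ν * t ^ 2) / (20 * a))) := by
  have hb : 0 < b := ha.trans_le hab
  set A : ℝ := (a : ℝ) with hA_def
  set B : ℝ := (b : ℝ) with hB_def
  have hA : 0 < A := by simp only [hA_def]; exact_mod_cast ha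
  have hB : 0 < B := by simp only [hB_def]; exact_mod_cast hb
  have hAB : A ≤ B := by simp only [hA_def, hB_def]; exact_mod_cast hab
  have hm1 : (1:ℝ) ≤ (m:ℝ) := by exact_mod_cast hm
  have htB : t * B < A := (lt_div_iff₀ hB).mp ht'
  -- Chernoff parameter and threshold
  set c : ℝ := t * B / 2 with hc_def
  set x : ℝ := t * (m:ℝ) / A with hx_def
  have hc : 0 < c := by positivity
  have hcA : ∀ u : ℝ, u = c ∨ u = -c → |u| ≤ A := by
    rintro u (rfl | rfl)
    · rw [abs_of_pos hc]; nlinarith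
    · rw [abs_neg, abs_of_pos hc]; nlinarith
  -- integrability of exp(u * X i)
  have hexp_meas : ∀ u : ℝ, Measurable fun y : ℝ => Real.exp (u * y) :=
    fun u => (measurable_id.const_mul u).exp
  have hint : ∀ (u : ℝ) (i : Fin m), Integrable (fun ω => Real.exp (u * X i ω)) μ := by
    intro u i
    have : Integrable (fun y => Real.exp (u * y)) (μ.map (X i)) := by
      rw [hdist i]; exact xab_integrable (hexp_meas u) ha hb
    exact (integrable_map_measure (hexp_meas u).aestronglyMeasurable
      (hmeas i).aemeasurable).mp this
  -- mgf value
  have hmgf : ∀ (u : ℝ) (i : Fin m),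
      mgf (X i) μ u = A/(A+B) * Real.exp (u * A⁻¹) + B/(A+B) * Real.exp (u * -B⁻¹) := by
    intro u i
    rw [mgf, ← integral_map (hmeas i).aemeasurable (hexp_meas u).aestronglyMeasurable,
      hdist i, xab_integral (hexp_meas u) ha hb]
  -- mgf bound
  have hmgf_le : ∀ (u : ℝ), u = c ∨ u = -c → ∀ i : Fin m,
      mgf (X i) μ u ≤ Real.exp (3*c^2/(4*A*B)) := by
    intro u hu i
    rw [hmgf u i]
    have := xab_mgf_bound hA hAB (hcA u hu)
    rcases hu with rfl | rfl
    · exact this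
    · simpa [neg_sq] using this
  have hmgf_sum_le : ∀ (u : ℝ), u = c ∨ u = -c →
      mgf (∑ i, X i) μ u ≤ Real.exp ((m:ℝ) * (3*c^2/(4*A*B))) := by
    intro u hu
    rw [hindep.mgf_sum hmeas Finset.univ]
    calc ∏ i : Fin m, mgf (X i) μ u
        ≤ ∏ _i : Fin m, Real.exp (3*c^2/(4*A*B)) :=
          Finset.prod_le_prod (fun i _ => mgf_nonneg) (fun i _ => hmgf_le u hu i)
      _ = Real.exp ((m:ℝ) * (3*c^2/(4*A*B))) := by
          rw [Finset.prod_const, Finset.card_univ, Fintype.card_fin, ← Real.exp_nat_mul]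
  have hSint : ∀ u : ℝ, Integrable (fun ω => Real.exp (u * (∑ i, X i) ω)) μ :=
    fun u => hindep.integrable_exp_mul_sum hmeas (fun i _ => hint u i)
  -- exponent comparison
  have hν' : (ν : ℝ) = A + B := by simp only [hA_def, hB_def, hν]; push_cast; rfl
  set E : ℝ := -c * x + (m:ℝ) * (3*c^2/(4*A*B)) with hE_def
  have hexpo : E ≤ -((m : ℝ) * ν * t ^ 2) / (20 * A) := by
    rw [hE_def, hν', hc_def, hx_def]
    have h1 : -(t * B / 2) * (t * (m:ℝ) / A) + (m:ℝ) * (3*(t * B / 2)^2/(4*A*B))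
        = -(5/16 * ((m:ℝ) * t^2 * B)) / A := by field_simp; ring
    rw [h1, div_le_div_iff₀ hA (by positivity)]
    nlinarith [mul_nonneg (mul_nonneg (mul_nonneg (by linarith : (0:ℝ) ≤ (m:ℝ))
      (sq_nonneg t)) hA.le) (by linarith : (0:ℝ) ≤ 25/4*B - (A+B))]
  have hup : (μ {ω | x ≤ (∑ i, X i) ω}).toReal ≤ Real.exp E := by
    calc (μ {ω | x ≤ (∑ i, X i) ω}).toReal
        ≤ Real.exp (-c * x) * mgf (∑ i, X i) μ c :=
          measure_ge_le_exp_mul_mgf x hc.le (hSint c)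
      _ ≤ Real.exp (-c * x) * Real.exp ((m:ℝ)*(3*c^2/(4*A*B))) := by
          gcongr
          exact hmgf_sum_le c (Or.inl rfl)
      _ = Real.exp E := by rw [← Real.exp_add]
  have hlo : (μ {ω | (∑ i, X i) ω ≤ -x}).toReal ≤ Real.exp E := by
    calc (μ {ω | (∑ i, X i) ω ≤ -x}).toReal
        ≤ Real.exp (-(-c) * -x) * mgf (∑ i, X i) μ (-c) :=
          measure_le_le_exp_mul_mgf (-x) (by linarith) (hSint (-c))
      _ = Real.exp (-c * x) * mgf (∑ i, X i) μ (-c) := by ring_nf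
      _ ≤ Real.exp (-c * x) * Real.exp ((m:ℝ)*(3*c^2/(4*A*B))) := by
          gcongr
          exact hmgf_sum_le (-c) (Or.inr rfl)
      _ = Real.exp E := by rw [← Real.exp_add]
  have hsub : {ω | x ≤ |∑ i, X i ω|}
      ⊆ {ω | x ≤ (∑ i, X i) ω} ∪ {ω | (∑ i, X i) ω ≤ -x} := by
    intro ω hω
    simp only [Set.mem_setOf_eq, Set.mem_union, Finset.sum_apply] at *
    rcases le_abs.mp hω with h | h
    · left; exact h
    · right; linarith
  have key : ∀ s : Set Ω, (μ s).toReal ≤ Real.exp E → μ s ≤ ENNReal.ofReal (Real.exp E) := by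
    intro s hs
    rw [← ENNReal.ofReal_toReal (measure_ne_top μ s)]
    exact ENNReal.ofReal_le_ofReal hs
  calc μ {ω | x ≤ |∑ i, X i ω|}
      ≤ μ ({ω | x ≤ (∑ i, X i) ω} ∪ {ω | (∑ i, X i) ω ≤ -x}) := measure_mono hsub
    _ ≤ μ {ω | x ≤ (∑ i, X i) ω} + μ {ω | (∑ i, X i) ω ≤ -x} := measure_union_le _ _
    _ ≤ ENNReal.ofReal (Real.exp E) + ENNReal.ofReal (Real.exp E) :=
        add_le_add (key _ hup) (key _ hlo)
    _ = ENNReal.ofReal (2 * Real.exp E) := by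
        rw [← ENNReal.ofReal_add (Real.exp_nonneg _) (Real.exp_nonneg _)]
        ring_nf
    _ ≤ ENNReal.ofReal (2 * Real.exp (-((m : ℝ) * ν * t ^ 2) / (20 * A))) := by
        apply ENNReal.ofReal_le_ofReal
        have := Real.exp_le_exp.mpr hexpo
        linarith
end

section
/- Suppose a, b, ν₀, ν are positive integers with a ≤ b, ν = a + b, and ν₀ ≤ ν, and let X₁, …, X_ν be ν independent random variables each distributed as X_{a,b}. Let S_m = X₁ + ⋯ + X_m for 0 ≤ m ≤ ν. Then for all real t with 0 < t < a/b, P[there exists an integer m with ν₀ ≤ m ≤ ν such that |S_m| ≥ tm/a] ≤ (40/t²)·exp(−ν₀·ν·t²/(20·a)). -/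
open MeasureTheory ProbabilityTheory

namespace XabAux

open Real Finset

lemma exp_quad {u : ℝ} (hu : |u| ≤ 1) : Real.exp u ≤ 1 + u + u ^ 2 := by
  have h := Real.exp_bound hu (n := 2) (by norm_num)
  have h2 : ∑ m ∈ Finset.range 2, u ^ m / m.factorial = 1 + u := by
    simp [Finset.sum_range_succ]
  rw [h2] at h
  have h3 := (abs_le.mp h).2
  have h4 : |u| ^ 2 = u ^ 2 := sq_abs u
  norm_num at h3
  nlinarith [sq_nonneg u]

lemma one_sub_exp_neg {x : ℝ} (h0 : 0 ≤ x) (h1 : x ≤ 1) : x / 4 ≤ 1 - Real.exp (-x) := by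
  have h := Real.exp_bound (x := -x) (by rwa [abs_neg, abs_of_nonneg h0]) (n := 2) (by norm_num)
  have h2 : ∑ m ∈ Finset.range 2, (-x) ^ m / m.factorial = 1 - x := by
    simp [Finset.sum_range_succ]; ring
  rw [h2] at h
  have h3 := (abs_le.mp h).2
  have h4 : |(-x)| ^ 2 = x ^ 2 := by rw [abs_neg, sq_abs]
  norm_num [h4] at h3
  nlinarith [sq_nonneg x]

lemma integrable_xab (a b : ℕ) (ha : 0 < a) {f : ℝ → ℝ} (hf : Measurable f) :
    Integrable f (xabMeasure a b) := by
  have hd : ∀ x : ℝ, Integrable f (Measure.dirac x) := by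
    intro x
    refine ⟨hf.aestronglyMeasurable, ?_⟩
    rw [HasFiniteIntegral, MeasureTheory.lintegral_dirac]
    exact ENNReal.coe_lt_top
  have hne : ((a : ENNReal) + b) ≠ 0 := by
    simp [ha.ne']
  have h1 : ((a : ENNReal) / ((a : ENNReal) + b)) ≠ ⊤ :=
    (ENNReal.div_lt_top (by simp) hne).ne
  have h2 : ((b : ENNReal) / ((a : ENNReal) + b)) ≠ ⊤ :=
    (ENNReal.div_lt_top (by simp) hne).ne
  exact Integrable.add_measure ((hd _).smul_measure h1) ((hd _).smul_measure h2)

lemma integral_xab (a b : ℕ) (ha : 0 < a) (hb : 0 < b) {f : ℝ → ℝ} (hf : Measurable f) :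
    ∫ x, f x ∂(xabMeasure a b) =
      ((a : ℝ) * f ((a : ℝ)⁻¹) + (b : ℝ) * f (-(b : ℝ)⁻¹)) / ((a : ℝ) + b) := by
  have hd : ∀ x : ℝ, Integrable f (Measure.dirac x) := by
    intro x
    refine ⟨hf.aestronglyMeasurable, ?_⟩
    rw [HasFiniteIntegral, MeasureTheory.lintegral_dirac]
    exact ENNReal.coe_lt_top
  have hne : ((a : ENNReal) + b) ≠ 0 := by simp [ha.ne']
  have h1 : ((a : ENNReal) / ((a : ENNReal) + b)) ≠ ⊤ :=
    (ENNReal.div_lt_top (by simp) hne).ne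
  have h2 : ((b : ENNReal) / ((a : ENNReal) + b)) ≠ ⊤ :=
    (ENNReal.div_lt_top (by simp) hne).ne
  rw [xabMeasure, integral_add_measure ((hd _).smul_measure h1) ((hd _).smul_measure h2),
    integral_smul_measure, integral_smul_measure, integral_dirac, integral_dirac,
    ENNReal.toReal_div, ENNReal.toReal_div,
    ENNReal.toReal_add (by simp) (by simp)]
  simp only [ENNReal.toReal_natCast, smul_eq_mul]
  ring

lemma mgf_integral_le {a b : ℕ} (ha : 0 < a) (hab : a ≤ b) {c : ℝ} (hc : |c| ≤ a) :
    ∫ x, Real.exp (c * x) ∂(xabMeasure a b) ≤ Real.exp (c ^ 2 / ((a : ℝ) * b)) := by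
  have hb : 0 < b := ha.trans_le hab
  have ha' : (0 : ℝ) < a := by exact_mod_cast ha
  have hb' : (0 : ℝ) < b := by exact_mod_cast hb
  have hab' : (a : ℝ) ≤ b := by exact_mod_cast hab
  rw [integral_xab a b ha hb (by fun_prop)]
  have h1 : Real.exp (c * (a : ℝ)⁻¹) ≤ 1 + c / a + (c / a) ^ 2 := by
    have : |c * (a : ℝ)⁻¹| ≤ 1 := by
      rw [abs_mul, abs_inv, abs_of_nonneg ha'.le]
      rw [mul_inv_le_iff₀ ha', one_mul]
      exact hc
    simpa [div_eq_mul_inv] using exp_quad this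
  have h2 : Real.exp (c * (-(b : ℝ)⁻¹)) ≤ 1 - c / b + (c / b) ^ 2 := by
    have : |c * (-(b : ℝ)⁻¹)| ≤ 1 := by
      rw [mul_neg, abs_neg, abs_mul, abs_inv, abs_of_nonneg hb'.le]
      rw [mul_inv_le_iff₀ hb', one_mul]
      exact hc.trans hab'
    have h := exp_quad this
    calc Real.exp (c * (-(b : ℝ)⁻¹)) ≤ 1 + c * (-(b : ℝ)⁻¹) + (c * (-(b : ℝ)⁻¹)) ^ 2 := h
      _ = 1 - c / b + (c / b) ^ 2 := by ring
  have key : ((a : ℝ) * Real.exp (c * (a : ℝ)⁻¹) + (b : ℝ) * Real.exp (c * (-(b : ℝ)⁻¹))) /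
        ((a : ℝ) + b) ≤ 1 + c ^ 2 / ((a : ℝ) * b) := by
    have hsum : (a : ℝ) * Real.exp (c * (a : ℝ)⁻¹) + (b : ℝ) * Real.exp (c * (-(b : ℝ)⁻¹)) ≤
        (a : ℝ) * (1 + c / a + (c / a) ^ 2) + (b : ℝ) * (1 - c / b + (c / b) ^ 2) := by
      gcongr
    have heq : (a : ℝ) * (1 + c / a + (c / a) ^ 2) + (b : ℝ) * (1 - c / b + (c / b) ^ 2) =
        ((a : ℝ) + b) * (1 + c ^ 2 / ((a : ℝ) * b)) := by
      field_simp
      ring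
    rw [div_le_iff₀ (by positivity)]
    rw [heq] at hsum
    linarith
  refine key.trans ?_
  have := Real.add_one_le_exp (c ^ 2 / ((a : ℝ) * b))
  linarith

end XabAux

open XabAux Finset in
/-- If `X₁, …, X_ν` are independent random variables each distributed as `X_{a,b}`, where
`0 < a ≤ b`, `ν = a + b` and `0 < ν₀ ≤ ν`, and `S_m = X₁ + ⋯ + X_m`, then for all
`0 < t < a/b`, the probability that some `m ∈ [ν₀, ν]` has `|S_m| ≥ t m / a` is at most
`(40 / t²) · exp(- ν₀ ν t² / (20 a))`. -/
theorem partial_sums_xab_concentration {Ω : Type*} [MeasurableSpace Ω] (μ : Measure Ω)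
    [IsProbabilityMeasure μ] (a b ν ν₀ : ℕ) (ha : 0 < a) (hab : a ≤ b) (hν : ν = a + b)
    (hν₀pos : 0 < ν₀) (hν₀ : ν₀ ≤ ν) (X : Fin ν → Ω → ℝ) (hmeas : ∀ i, Measurable (X i))
    (hindep : iIndepFun X μ)
    (hdist : ∀ i, μ.map (X i) = xabMeasure a b)
    (t : ℝ) (ht : 0 < t) (ht' : t < (a : ℝ) / b) :
    μ {ω | ∃ m : ℕ, ν₀ ≤ m ∧ m ≤ ν ∧
        t * m / a ≤ |∑ i : Fin ν, if (i : ℕ) < m then X i ω else 0|} ≤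
      ENNReal.ofReal (40 / t ^ 2 * Real.exp (-((ν₀ : ℝ) * ν * t ^ 2) / (20 * a))) := by
  classical
  have hb : 0 < b := ha.trans_le hab
  have ha' : (0 : ℝ) < a := by exact_mod_cast ha
  have hb' : (0 : ℝ) < b := by exact_mod_cast hb
  have hab' : (a : ℝ) ≤ b := by exact_mod_cast hab
  have ht1 : t < 1 := ht'.trans_le (by rw [div_le_one hb']; exact hab')
  -- the exponential parameter and the per-step decay rate
  set lam : ℝ := t * b / 2 with hlam_def
  set q : ℝ := t ^ 2 * b / (4 * a) with hq_def
  have hlam_pos : 0 < lam := by positivity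
  have hq_pos : 0 < q := by positivity
  have hlam_le : |lam| ≤ (a : ℝ) := by
    rw [abs_of_nonneg hlam_pos.le]
    have : t * b < a := (lt_div_iff₀ hb').mp ht'
    linarith
  have hlam_le' : |(-lam)| ≤ (a : ℝ) := by rwa [abs_neg]
  -- integrability of exponential moments
  have hint : ∀ (i : Fin ν) (c : ℝ), Integrable (fun ω => Real.exp (c * X i ω)) μ := by
    intro i c
    have h0 : Integrable (fun x => Real.exp (c * x)) (xabMeasure a b) :=
      integrable_xab a b ha (by fun_prop)
    rw [← hdist i] at h0
    exact (integrable_map_measure (h0.aestronglyMeasurable) (hmeas i).aemeasurable).mp h0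
  -- each individual mgf is bounded
  have hmgf : ∀ (i : Fin ν) (c : ℝ), |c| ≤ (a : ℝ) →
      mgf (X i) μ c ≤ Real.exp (c ^ 2 / ((a : ℝ) * b)) := by
    intro i c hc
    have hmap : mgf (X i) μ c = ∫ x, Real.exp (c * x) ∂(xabMeasure a b) := by
      rw [← hdist i, mgf]
      rw [integral_map (hmeas i).aemeasurable
        ((by fun_prop : Measurable fun x : ℝ => Real.exp (c * x)).aestronglyMeasurable)]
    rw [hmap]
    exact mgf_integral_le ha hab hc
  -- partial-sum index sets
  set F : ℕ → Finset (Fin ν) := fun m => Finset.univ.filter (fun i => (i : ℕ) < m) with hF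
  have hcard : ∀ m, m ≤ ν → (F m).card = m := by
    intro m hm
    have hEq : F m = (Finset.range m).attachFin
        (fun x hx => lt_of_lt_of_le (Finset.mem_range.mp hx) hm) := by
      ext i
      simp [hF, Finset.mem_attachFin]
    rw [hEq, Finset.card_attachFin, Finset.card_range]
  -- the mgf of partial sums
  have hmgf_sum : ∀ (m : ℕ), m ≤ ν → ∀ (c : ℝ), |c| ≤ (a : ℝ) →
      mgf (∑ i ∈ F m, X i) μ c ≤ Real.exp ((m : ℝ) * (c ^ 2 / ((a : ℝ) * b))) := by
    intro m hm c hc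
    rw [hindep.mgf_sum hmeas (F m)]
    calc ∏ i ∈ F m, mgf (X i) μ c ≤ ∏ _i ∈ F m, Real.exp (c ^ 2 / ((a : ℝ) * b)) :=
          Finset.prod_le_prod (fun i _ => mgf_nonneg) (fun i _ => hmgf i c hc)
      _ = Real.exp (c ^ 2 / ((a : ℝ) * b)) ^ (F m).card := Finset.prod_const _
      _ = Real.exp ((m : ℝ) * (c ^ 2 / ((a : ℝ) * b))) := by
          rw [hcard m hm, ← Real.exp_nat_mul]
  -- the per-m tail bound
  have key : ∀ m : ℕ, m ≤ ν →
      μ {ω | t * m / a ≤ |(∑ i ∈ F m, X i) ω|} ≤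
        ENNReal.ofReal (2 * Real.exp (-(q * m))) := by
    intro m hm
    have hsum_int : ∀ c : ℝ, Integrable (fun ω => Real.exp (c * (∑ i ∈ F m, X i) ω)) μ :=
      fun c => hindep.integrable_exp_mul_sum hmeas (fun i _ => hint i c)
    have hexp_eq : Real.exp (-lam * (t * m / a)) *
        Real.exp ((m : ℝ) * (lam ^ 2 / ((a : ℝ) * b))) = Real.exp (-(q * m)) := by
      rw [← Real.exp_add]
      congr 1
      rw [hlam_def, hq_def]
      field_simp
      ring
    have hup : (μ {ω | t * m / a ≤ (∑ i ∈ F m, X i) ω}).toReal ≤ Real.exp (-(q * m)) := by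
      refine (measure_ge_le_exp_mul_mgf (t * m / a) hlam_pos.le (hsum_int lam)).trans ?_
      rw [← hexp_eq]
      gcongr
      exact hmgf_sum m hm lam hlam_le
    have hlo : (μ {ω | (∑ i ∈ F m, X i) ω ≤ -(t * m / a)}).toReal ≤ Real.exp (-(q * m)) := by
      refine (measure_le_le_exp_mul_mgf (-(t * m / a)) (neg_nonpos.mpr hlam_pos.le)
        (hsum_int (-lam))).trans ?_
      have heq2 : -(-lam) * -(t * m / a) = -lam * (t * m / a) := by ring
      rw [heq2, ← hexp_eq]
      gcongr
      have := hmgf_sum m hm (-lam) hlam_le'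
      calc mgf (∑ i ∈ F m, X i) μ (-lam)
          ≤ Real.exp ((m : ℝ) * ((-lam) ^ 2 / ((a : ℝ) * b))) := this
        _ = Real.exp ((m : ℝ) * (lam ^ 2 / ((a : ℝ) * b))) := by rw [neg_sq]
    have hsub : {ω | t * m / a ≤ |(∑ i ∈ F m, X i) ω|} ⊆
        {ω | t * m / a ≤ (∑ i ∈ F m, X i) ω} ∪ {ω | (∑ i ∈ F m, X i) ω ≤ -(t * m / a)} := by
      intro ω hω
      simp only [Set.mem_setOf_eq, Set.mem_union] at *
      rcases abs_cases ((∑ i ∈ F m, X i) ω) with ⟨h1, _⟩ | ⟨h1, _⟩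
      · left; rwa [h1] at hω
      · right; rw [h1] at hω; linarith
    calc μ {ω | t * m / a ≤ |(∑ i ∈ F m, X i) ω|}
        ≤ μ ({ω | t * m / a ≤ (∑ i ∈ F m, X i) ω} ∪
            {ω | (∑ i ∈ F m, X i) ω ≤ -(t * m / a)}) := measure_mono hsub
      _ ≤ μ {ω | t * m / a ≤ (∑ i ∈ F m, X i) ω} +
            μ {ω | (∑ i ∈ F m, X i) ω ≤ -(t * m / a)} := measure_union_le _ _
      _ ≤ ENNReal.ofReal (Real.exp (-(q * m))) + ENNReal.ofReal (Real.exp (-(q * m))) := by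
          gcongr
          · exact (ENNReal.le_ofReal_iff_toReal_le (measure_ne_top μ _)
              (Real.exp_pos _).le).mpr hup
          · exact (ENNReal.le_ofReal_iff_toReal_le (measure_ne_top μ _)
              (Real.exp_pos _).le).mpr hlo
      _ = ENNReal.ofReal (2 * Real.exp (-(q * m))) := by
          rw [← ENNReal.ofReal_add (Real.exp_pos _).le (Real.exp_pos _).le]
          congr 1
          ring
  -- union bound
  have hsub2 : {ω | ∃ m : ℕ, ν₀ ≤ m ∧ m ≤ ν ∧
        t * m / a ≤ |∑ i : Fin ν, if (i : ℕ) < m then X i ω else 0|} ⊆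
      ⋃ m ∈ Finset.Icc ν₀ ν, {ω | t * m / a ≤ |(∑ i ∈ F m, X i) ω|} := by
    intro ω hω
    obtain ⟨m, hm1, hm2, hm3⟩ := hω
    refine Set.mem_biUnion (Finset.mem_Icc.mpr ⟨hm1, hm2⟩) ?_
    have hFsum : (∑ i ∈ F m, X i) ω = ∑ i : Fin ν, (if (i : ℕ) < m then X i ω else 0) := by
      rw [Finset.sum_apply]
      exact Finset.sum_filter _ _
    show t * m / a ≤ |(∑ i ∈ F m, X i) ω|
    rw [hFsum]
    exact hm3
  have hunion : μ {ω | ∃ m : ℕ, ν₀ ≤ m ∧ m ≤ ν ∧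
        t * m / a ≤ |∑ i : Fin ν, if (i : ℕ) < m then X i ω else 0|} ≤
      ∑ m ∈ Finset.Icc ν₀ ν, ENNReal.ofReal (2 * Real.exp (-(q * m))) := by
    refine (measure_mono hsub2).trans ?_
    refine (measure_biUnion_finset_le _ _).trans ?_
    exact Finset.sum_le_sum fun m hm => key m (Finset.mem_Icc.mp hm).2
  refine hunion.trans ?_
  rw [← ENNReal.ofReal_sum_of_nonneg (fun m _ => by positivity)]
  refine ENNReal.ofReal_le_ofReal ?_
  -- the geometric sum estimate
  set r : ℝ := Real.exp (-q) with hr_def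
  have hr0 : 0 ≤ r := (Real.exp_pos _).le
  have hr1 : r < 1 := Real.exp_lt_one_iff.mpr (by linarith)
  have hsum_eq : ∀ m : ℕ, 2 * Real.exp (-(q * m)) = 2 * r ^ m := by
    intro m
    rw [hr_def, ← Real.exp_nat_mul]
    congr 2
    ring
  have hgeom : ∑ m ∈ Finset.Icc ν₀ ν, 2 * Real.exp (-(q * m)) ≤ 2 * (r ^ ν₀ / (1 - r)) := by
    calc ∑ m ∈ Finset.Icc ν₀ ν, 2 * Real.exp (-(q * m))
        = 2 * ∑ m ∈ Finset.Icc ν₀ ν, r ^ m := by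
          rw [Finset.mul_sum]
          exact Finset.sum_congr rfl fun m _ => hsum_eq m
      _ ≤ 2 * (r ^ ν₀ / (1 - r)) := by
          gcongr 2 * ?_
          rw [← Finset.Ico_add_one_right_eq_Icc]
          exact geom_sum_Ico_le_of_lt_one hr0 hr1
  refine hgeom.trans ?_
  -- 1 - r ≥ t²/16
  have ht2 : t ^ 2 ≤ 1 := by nlinarith
  have hq_ge : t ^ 2 / 4 ≤ q := by
    rw [hq_def]
    rw [div_le_div_iff₀ (by norm_num) (by positivity)]
    nlinarith
  have h1r : t ^ 2 / 16 ≤ 1 - r := by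
    rcases le_total q 1 with h | h
    · have h0 := one_sub_exp_neg hq_pos.le h
      linarith
    · have h0 := one_sub_exp_neg (by norm_num : (0:ℝ) ≤ 1) le_rfl
      have h2 : r ≤ Real.exp (-1) := Real.exp_le_exp.mpr (by linarith)
      linarith
  -- exponent comparison
  have hexp_cmp : Real.exp (-q * ν₀) ≤ Real.exp (-((ν₀ : ℝ) * ν * t ^ 2) / (20 * a)) := by
    refine Real.exp_le_exp.mpr ?_
    rw [neg_mul, neg_div, neg_le_neg_iff]
    have hν' : (ν : ℝ) = (a : ℝ) + b := by exact_mod_cast hν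
    have hν₀' : (0 : ℝ) ≤ (ν₀ : ℝ) := Nat.cast_nonneg _
    have hνle : (ν : ℝ) ≤ 2 * b := by rw [hν']; linarith
    rw [hq_def, div_mul_eq_mul_div, div_le_div_iff₀ (by positivity) (by positivity)]
    nlinarith [mul_nonneg (mul_nonneg hν₀' (sq_nonneg t)) ha'.le,
      mul_le_mul_of_nonneg_right hνle (mul_nonneg (mul_nonneg hν₀' (sq_nonneg t)) ha'.le)]
  have hrpow : r ^ ν₀ = Real.exp (-q * ν₀) := by
    rw [hr_def, ← Real.exp_nat_mul]
    congr 1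
    ring
  have ht2pos : (0 : ℝ) < t ^ 2 := by positivity
  calc 2 * (r ^ ν₀ / (1 - r)) ≤ 2 * (r ^ ν₀ / (t ^ 2 / 16)) := by
        have h16 : (0 : ℝ) < t ^ 2 / 16 := by positivity
        have hnum : (0 : ℝ) ≤ r ^ ν₀ := pow_nonneg hr0 _
        exact mul_le_mul_of_nonneg_left (div_le_div_of_nonneg_left hnum h16 h1r) (by norm_num)
    _ = 32 / t ^ 2 * r ^ ν₀ := by field_simp; ring
    _ ≤ 40 / t ^ 2 * Real.exp (-((ν₀ : ℝ) * ν * t ^ 2) / (20 * a)) := by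
        rw [hrpow]
        refine mul_le_mul ?_ hexp_cmp (Real.exp_pos _).le (by positivity)
        gcongr
        norm_num
end

section
/- Let a, ν, ν₀ be positive integers with a ≤ ν/2 and ν₀ ≤ ν. Let I be a uniformly random a-element subset of {1, …, ν}. For each 1 ≤ i ≤ ν, let s_i : {0,1}^{i−1} → {0,1} be an arbitrary function, and set H_i = s_i(1_{1∈I}, …, 1_{(i−1)∈I}). Let h = Σ_{i=1}^{ν} H_i and h_A = Σ_{i∈I} H_i. Then for all real t with 0 < t < a/ν, P[(h ≥ ν₀) and |h_A − a·h/ν| ≥ t·h] ≤ (80·√ν/t²)·exp(−ν₀·ν·t²/(20·a)). -/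
open MeasureTheory ProbabilityTheory

namespace CB
open Finset
variable {ν : ℕ}

/-- rank of `i` within `P`: number of elements of `P` below `i`. -/
def rnk (P : Finset (Fin ν)) (i : Fin ν) : ℕ := #(P.filter (· < i))

lemma rnk_lt {P : Finset (Fin ν)} {i : Fin ν} (hi : i ∈ P) : rnk P i < P.card := by
  apply Finset.card_lt_card
  constructor
  · exact filter_subset _ _
  · intro hsub
    have := hsub hi
    simp at this

lemma rnk_strictMonoOn {P : Finset (Fin ν)} {i i' : Fin ν} (hi : i ∈ P)
    (hlt : i < i') : rnk P i < rnk P i' := by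
  apply Finset.card_lt_card
  constructor
  · intro x hx
    simp only [mem_filter] at hx ⊢
    exact ⟨hx.1, lt_trans hx.2 hlt⟩
  · intro hsub
    have : i ∈ P.filter (· < i') := by simp [hi, hlt]
    have := hsub this
    simp at this

lemma rnk_injOn {P : Finset (Fin ν)} {i i' : Fin ν} (hi : i ∈ P) (hi' : i' ∈ P)
    (h : rnk P i = rnk P i') : i = i' := by
  rcases lt_trichotomy i i' with hc | hc | hc
  · exact absurd h (Nat.ne_of_lt (rnk_strictMonoOn hi hc))
  · exact hc
  · exact absurd h.symm (Nat.ne_of_lt (rnk_strictMonoOn hi' hc))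

lemma rnk_image (P : Finset (Fin ν)) : P.image (rnk P) = Finset.range P.card := by
  apply Finset.eq_of_subset_of_card_le
  · intro x hx
    simp only [mem_image] at hx
    obtain ⟨i, hi, rfl⟩ := hx
    exact Finset.mem_range.2 (rnk_lt hi)
  · rw [Finset.card_range, Finset.card_image_of_injOn (fun i hi i' hi' => rnk_injOn hi hi')]

lemma filter_rnk_card (P : Finset (Fin ν)) (j : ℕ) :
    (P.filter (fun i => rnk P i < j)).card = min j P.card := by
  have himg : (P.filter (fun i => rnk P i < j)).image (rnk P) = Finset.range (min j P.card) := by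
    ext x
    simp only [mem_image, mem_filter, mem_range, lt_min_iff]
    constructor
    · rintro ⟨i, ⟨hi, hij⟩, rfl⟩
      exact ⟨hij, rnk_lt hi⟩
    · rintro ⟨hxj, hxc⟩
      have : x ∈ P.image (rnk P) := by rw [rnk_image]; exact mem_range.2 hxc
      simp only [mem_image] at this
      obtain ⟨i, hi, rfl⟩ := this
      exact ⟨i, ⟨hi, hxj⟩, rfl⟩
  have hinj : ∀ i ∈ P.filter (fun i => rnk P i < j), ∀ i' ∈ P.filter (fun i => rnk P i < j),
      rnk P i = rnk P i' → i = i' := by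
    intro i hi i' hi' h
    exact rnk_injOn (mem_filter.1 hi).1 (mem_filter.1 hi').1 h
  rw [← Finset.card_image_of_injOn hinj, himg, Finset.card_range]

lemma rnk_surj {P : Finset (Fin ν)} {x : ℕ} (hx : x < P.card) : ∃ i ∈ P, rnk P i = x := by
  have : x ∈ P.image (rnk P) := by rw [rnk_image]; exact mem_range.2 hx
  simpa only [mem_image] using this


/-- A rule is predictable if its decision at `i` depends only on membership below `i`. -/
def Pred (r : Finset (Fin ν) → Fin ν → Bool) : Prop :=
  ∀ S T : Finset (Fin ν), ∀ i : Fin ν, (∀ j : Fin ν, j < i → (j ∈ S ↔ j ∈ T)) → r S i = r T i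

def Sel (r : Finset (Fin ν) → Fin ν → Bool) (S : Finset (Fin ν)) : Finset (Fin ν) :=
  Finset.univ.filter (fun i => r S i = true)

/-- the first `j` selected elements -/
def tau (r : Finset (Fin ν) → Fin ν → Bool) (j : ℕ) (S : Finset (Fin ν)) : Finset (Fin ν) :=
  (Sel r S).filter (fun i => rnk (Sel r S) i < j)

lemma tau_card {r : Finset (Fin ν) → Fin ν → Bool} {j : ℕ} {S : Finset (Fin ν)}
    (h : j ≤ (Sel r S).card) : (tau r j S).card = j := by
  rw [tau, filter_rnk_card]; omega

def compress (τ : Finset (Fin ν)) (i : Fin ν) : ℕ := i.val - #(τ.filter (· < i))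

lemma cnt_le {τ : Finset (Fin ν)} {i : Fin ν} : #(τ.filter (· < i)) ≤ i.val := by
  have : τ.filter (· < i) ⊆ Finset.Iio i := by
    intro x hx; simp only [mem_filter] at hx; exact Finset.mem_Iio.2 hx.2
  calc #(τ.filter (· < i)) ≤ #(Finset.Iio i) := card_le_card this
    _ = i.val := Fin.card_Iio i

lemma compress_strictMono {τ : Finset (Fin ν)} {i i' : Fin ν} (hi : i ∉ τ)
    (hlt : i < i') : compress τ i < compress τ i' := by
  have h1 : #(τ.filter (· < i')) ≤ #(τ.filter (· < i)) + (i'.val - i.val - 1) := by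
    have hsub : τ.filter (· < i') ⊆ (τ.filter (· < i)) ∪ Finset.Ioo i i' := by
      intro x hx
      simp only [mem_filter] at hx
      rcases lt_trichotomy x i with hc | hc | hc
      · exact Finset.mem_union_left _ (mem_filter.2 ⟨hx.1, hc⟩)
      · exact absurd (hc ▸ hx.1) hi
      · exact Finset.mem_union_right _ (Finset.mem_Ioo.2 ⟨hc, hx.2⟩)
    calc #(τ.filter (· < i')) ≤ #((τ.filter (· < i)) ∪ Finset.Ioo i i') := card_le_card hsub
      _ ≤ #(τ.filter (· < i)) + #(Finset.Ioo i i') := card_union_le _ _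
      _ = #(τ.filter (· < i)) + (i'.val - i.val - 1) := by rw [Fin.card_Ioo]
  have h2 := @cnt_le ν τ i
  have h4 : i.val < i'.val := hlt
  unfold compress
  omega

lemma compress_injOn {τ : Finset (Fin ν)} {i i' : Fin ν} (hi : i ∉ τ) (hi' : i' ∉ τ)
    (h : compress τ i = compress τ i') : i = i' := by
  rcases lt_trichotomy i i' with hc | hc | hc
  · exact absurd h (Nat.ne_of_lt (compress_strictMono hi hc))
  · exact hc
  · exact absurd h.symm (Nat.ne_of_lt (compress_strictMono hi' hc))

lemma compress_lt {τ : Finset (Fin ν)} {i : Fin ν} (hi : i ∉ τ) :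
    compress τ i < ν - τ.card := by
  have h1 : τ.card ≤ #(τ.filter (· < i)) + (ν - 1 - i.val) := by
    have hsub : τ ⊆ (τ.filter (· < i)) ∪ Finset.Ioi i := by
      intro x hx
      rcases lt_trichotomy x i with hc | hc | hc
      · exact Finset.mem_union_left _ (mem_filter.2 ⟨hx, hc⟩)
      · exact absurd (hc ▸ hx) hi
      · exact Finset.mem_union_right _ (Finset.mem_Ioi.2 hc)
    calc τ.card ≤ #((τ.filter (· < i)) ∪ Finset.Ioi i) := card_le_card hsub
      _ ≤ #(τ.filter (· < i)) + #(Finset.Ioi i) := card_union_le _ _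
      _ = #(τ.filter (· < i)) + (ν - 1 - i.val) := by rw [Fin.card_Ioi]
  have h2 := @cnt_le ν τ i
  have h3 : i.val < ν := i.isLt
  unfold compress
  omega


section Replay
variable {r : Finset (Fin ν) → Fin ν → Bool} (hr : Pred r) {j : ℕ}

lemma mem_Sel {S : Finset (Fin ν)} {x : Fin ν} : x ∈ Sel r S ↔ r S x = true := by
  simp [Sel]

include hr

lemma agree_sel {S T : Finset (Fin ν)} {i : Fin ν}
    (hag : ∀ y : Fin ν, y < i → (y ∈ S ↔ y ∈ T)) :
    ∀ x : Fin ν, x ≤ i → r S x = r T x := fun x hx =>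
  hr S T x (fun y hy => hag y (lt_of_lt_of_le hy hx))

lemma agree_rnkSel {S T : Finset (Fin ν)} {i : Fin ν}
    (hag : ∀ y : Fin ν, y < i → (y ∈ S ↔ y ∈ T)) :
    ∀ x : Fin ν, x ≤ i → rnk (Sel r S) x = rnk (Sel r T) x := by
  intro x hx
  unfold rnk
  congr 1
  ext y
  simp only [mem_filter, Sel, Finset.mem_univ, true_and]
  constructor
  · rintro ⟨h1, h2⟩
    exact ⟨(agree_sel hr hag y (le_of_lt (lt_of_lt_of_le h2 hx))) ▸ h1, h2⟩
  · rintro ⟨h1, h2⟩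
    exact ⟨(agree_sel hr hag y (le_of_lt (lt_of_lt_of_le h2 hx))) ▸ h1, h2⟩

lemma agree_tau {S T : Finset (Fin ν)} {i : Fin ν}
    (hag : ∀ y : Fin ν, y < i → (y ∈ S ↔ y ∈ T)) :
    ∀ x : Fin ν, x ≤ i → (x ∈ tau r j S ↔ x ∈ tau r j T) := by
  intro x hx
  simp only [tau, mem_filter, mem_Sel]
  rw [agree_sel hr hag x hx, agree_rnkSel hr hag x hx]

lemma agree_compress {S T : Finset (Fin ν)} {i : Fin ν}
    (hag : ∀ y : Fin ν, y < i → (y ∈ S ↔ y ∈ T)) :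
    compress (tau r j S) i = compress (tau r j T) i := by
  unfold compress
  congr 1
  congr 1
  ext y
  simp only [mem_filter]
  constructor
  · rintro ⟨h1, h2⟩
    exact ⟨(agree_tau hr hag y (le_of_lt h2)).1 h1, h2⟩
  · rintro ⟨h1, h2⟩
    exact ⟨(agree_tau hr hag y (le_of_lt h2)).2 h1, h2⟩

lemma replay_inj {S₁ S₂ : Finset (Fin ν)}
    (himg : (S₁ \ tau r j S₁).image (compress (tau r j S₁))
          = (S₂ \ tau r j S₂).image (compress (tau r j S₂)))
    (hcase : (tau r j S₁ ⊆ S₁ ∧ tau r j S₂ ⊆ S₂)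
           ∨ (Disjoint (tau r j S₁) S₁ ∧ Disjoint (tau r j S₂) S₂)) :
    S₁ = S₂ := by
  have main : ∀ n : ℕ, ∀ i : Fin ν, i.val ≤ n → (i ∈ S₁ ↔ i ∈ S₂) := by
    intro n
    induction n using Nat.strong_induction_on with
    | _ n ih =>
      intro i hi
      have hag : ∀ y : Fin ν, y < i → (y ∈ S₁ ↔ y ∈ S₂) := by
        intro y hy
        exact ih y.val (lt_of_lt_of_le hy hi) y le_rfl
      have htau : i ∈ tau r j S₁ ↔ i ∈ tau r j S₂ := agree_tau hr hag i le_rfl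
      by_cases hiτ : i ∈ tau r j S₁
      · rcases hcase with ⟨h1, h2⟩ | ⟨h1, h2⟩
        · simp [h1 hiτ, h2 (htau.1 hiτ)]
        · constructor
          · intro hmem; exact absurd (Finset.mem_inter.2 ⟨hiτ, hmem⟩)
              (by simp [Finset.disjoint_iff_inter_eq_empty.1 h1])
          · intro hmem; exact absurd (Finset.mem_inter.2 ⟨htau.1 hiτ, hmem⟩)
              (by simp [Finset.disjoint_iff_inter_eq_empty.1 h2])
      · have hiτ₂ : i ∉ tau r j S₂ := fun hmem => hiτ (htau.2 hmem)
        have hcomp : compress (tau r j S₁) i = compress (tau r j S₂) i :=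
          agree_compress hr hag
        -- in the "lower" case, S \ tau = S
        have hsd : ∀ (S : Finset (Fin ν)), Disjoint (tau r j S) S → S \ tau r j S = S := by
          intro S hd
          exact Finset.sdiff_eq_self_of_disjoint hd.symm
        constructor
        · intro hmem
          have hin : compress (tau r j S₁) i ∈ (S₂ \ tau r j S₂).image (compress (tau r j S₂)) := by
            rw [← himg]
            exact Finset.mem_image_of_mem _ (Finset.mem_sdiff.2 ⟨hmem, hiτ⟩)
          obtain ⟨x, hx, hxe⟩ := Finset.mem_image.1 hin
          have hxτ : x ∉ tau r j S₂ := (Finset.mem_sdiff.1 hx).2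
          have : x = i := compress_injOn hxτ hiτ₂ (hxe.trans hcomp)
          exact this ▸ (Finset.mem_sdiff.1 hx).1
        · intro hmem
          have hin : compress (tau r j S₂) i ∈ (S₁ \ tau r j S₁).image (compress (tau r j S₁)) := by
            rw [himg]
            exact Finset.mem_image_of_mem _ (Finset.mem_sdiff.2 ⟨hmem, hiτ₂⟩)
          obtain ⟨x, hx, hxe⟩ := Finset.mem_image.1 hin
          have hxτ : x ∉ tau r j S₁ := (Finset.mem_sdiff.1 hx).2
          have : x = i := compress_injOn hxτ hiτ (hxe.trans hcomp.symm)
          exact this ▸ (Finset.mem_sdiff.1 hx).1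
  ext i
  exact main i.val i le_rfl

end Replay

lemma card_upper {r : Finset (Fin ν) → Fin ν → Bool} (hr : Pred r) (j a : ℕ) :
    ((Finset.powersetCard a (Finset.univ : Finset (Fin ν))).filter
       (fun S => j ≤ (Sel r S).card ∧ tau r j S ⊆ S)).card ≤ (ν - j).choose (a - j) := by
  have hkey : ((Finset.powersetCard a (Finset.univ : Finset (Fin ν))).filter
       (fun S => j ≤ (Sel r S).card ∧ tau r j S ⊆ S)).card
      ≤ (Finset.powersetCard (a - j) (Finset.range (ν - j))).card := by
    apply Finset.card_le_card_of_injOn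
      (fun S => (S \ tau r j S).image (compress (tau r j S)))
    · intro S hS
      simp only [Finset.mem_coe, mem_filter, Finset.mem_powersetCard_univ] at hS
      obtain ⟨hcard, hj, hτ⟩ := hS
      have hτc : (tau r j S).card = j := tau_card hj
      rw [Finset.mem_coe, Finset.mem_powersetCard]
      constructor
      · intro x hx
        obtain ⟨i, hi, rfl⟩ := Finset.mem_image.1 hx
        have := compress_lt (Finset.mem_sdiff.1 hi).2
        rw [hτc] at this
        exact Finset.mem_range.2 this
      · rw [Finset.card_image_of_injOn
          (fun i hi i' hi' h => compress_injOn (Finset.mem_sdiff.1 hi).2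
            (Finset.mem_sdiff.1 hi').2 h)]
        rw [Finset.card_sdiff_of_subset hτ, hcard, hτc]
    · intro S₁ h₁ S₂ h₂ himg
      simp only [Finset.mem_coe, mem_filter] at h₁ h₂
      exact replay_inj hr himg (Or.inl ⟨h₁.2.2, h₂.2.2⟩)
  rw [Finset.card_powersetCard, Finset.card_range] at hkey
  exact hkey

lemma card_lower {r : Finset (Fin ν) → Fin ν → Bool} (hr : Pred r) (j a : ℕ) :
    ((Finset.powersetCard a (Finset.univ : Finset (Fin ν))).filter
       (fun S => j ≤ (Sel r S).card ∧ Disjoint (tau r j S) S)).card ≤ (ν - j).choose a := by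
  have hkey : ((Finset.powersetCard a (Finset.univ : Finset (Fin ν))).filter
       (fun S => j ≤ (Sel r S).card ∧ Disjoint (tau r j S) S)).card
      ≤ (Finset.powersetCard a (Finset.range (ν - j))).card := by
    apply Finset.card_le_card_of_injOn
      (fun S => S.image (compress (tau r j S)))
    · intro S hS
      simp only [Finset.mem_coe, mem_filter, Finset.mem_powersetCard_univ] at hS
      obtain ⟨hcard, hj, hτ⟩ := hS
      have hτc : (tau r j S).card = j := tau_card hj
      have hnot : ∀ i ∈ S, i ∉ tau r j S := by
        intro i hi hmem
        exact (Finset.disjoint_left.1 hτ) hmem hi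
      rw [Finset.mem_coe, Finset.mem_powersetCard]
      constructor
      · intro x hx
        obtain ⟨i, hi, rfl⟩ := Finset.mem_image.1 hx
        have := compress_lt (hnot i hi)
        rw [hτc] at this
        exact Finset.mem_range.2 this
      · rw [Finset.card_image_of_injOn
          (fun i hi i' hi' h => compress_injOn (hnot i hi) (hnot i' hi') h), hcard]
    · intro S₁ h₁ S₂ h₂ himg
      simp only [Finset.mem_coe, mem_filter] at h₁ h₂
      have e₁ : S₁ \ tau r j S₁ = S₁ := Finset.sdiff_eq_self_of_disjoint h₁.2.2.symm
      have e₂ : S₂ \ tau r j S₂ = S₂ := Finset.sdiff_eq_self_of_disjoint h₂.2.2.symm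
      apply replay_inj hr _ (Or.inr ⟨h₁.2.2, h₂.2.2⟩)
      rw [e₁, e₂]
      exact himg
  rw [Finset.card_powersetCard, Finset.card_range] at hkey
  exact hkey

section Game
variable (s : (i : Fin ν) → (Fin (i : ℕ) → Bool) → Bool)

/-- the heads decision as a function of the bucket set -/
def Hd : Finset (Fin ν) → Fin ν → Bool := fun S i =>
  s i (fun j => decide ((⟨j, j.isLt.trans i.isLt⟩ : Fin ν) ∈ S))

lemma Hd_pred : Pred (Hd s) := by
  intro S T i hag
  unfold Hd
  congr 1
  funext j
  have := hag ⟨j, j.isLt.trans i.isLt⟩ (Fin.lt_def.mpr (by simpa using j.isLt))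
  simp [this]

/-- The rule selecting heads whose head-rank lies in `K`. -/
def ruleK (K : Finset ℕ) : Finset (Fin ν) → Fin ν → Bool := fun S i =>
  Hd s S i && decide (rnk (Sel (Hd s) S) i ∈ K)

lemma ruleK_pred (K : Finset ℕ) : Pred (ruleK s K) := by
  intro S T i hag
  unfold ruleK
  rw [Hd_pred s S T i hag, agree_rnkSel (Hd_pred s) hag i le_rfl]

variable {m k j aa : ℕ}

/-- heads among the first `m` heads that land in `S` -/
def YS (S : Finset (Fin ν)) (m : ℕ) : Finset (Fin ν) :=
  (Sel (Hd s) S).filter (fun i => rnk (Sel (Hd s) S) i < m ∧ i ∈ S)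

/-- heads among the first `m` heads that land outside `S` -/
def ZS (S : Finset (Fin ν)) (m : ℕ) : Finset (Fin ν) :=
  (Sel (Hd s) S).filter (fun i => rnk (Sel (Hd s) S) i < m ∧ i ∉ S)

lemma perS_upper {S : Finset (Fin ν)} (hk : k ≤ (YS s S m).card) (hjk : j ≤ k) :
    k.choose j ≤ ((Finset.powersetCard j (Finset.range m)).filter
      (fun K => j ≤ (Sel (ruleK s K) S).card ∧ tau (ruleK s K) j S ⊆ S)).card := by
  have h1 : k.choose j ≤ (YS s S m).card.choose j := Nat.choose_le_choose j hk
  rw [← Finset.card_powersetCard j (YS s S m)] at h1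
  refine le_trans h1 (Finset.card_le_card_of_injOn
    (fun T => T.image (rnk (Sel (Hd s) S))) ?_ ?_)
  · intro T hT
    rw [Finset.mem_coe, Finset.mem_powersetCard] at hT
    obtain ⟨hTsub, hTcard⟩ := hT
    have hTsel : T ⊆ Sel (Hd s) S := hTsub.trans (Finset.filter_subset _ _)
    have hSelEq : Sel (ruleK s (T.image (rnk (Sel (Hd s) S)))) S = T := by
      ext i
      simp only [Sel, ruleK, Finset.mem_filter, Finset.mem_univ, true_and,
        Bool.and_eq_true, decide_eq_true_eq, Finset.mem_image]
      constructor
      · rintro ⟨hhd, x, hxT, hxr⟩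
        have hisel : i ∈ Sel (Hd s) S := by simp [Sel, hhd]
        have := rnk_injOn (hTsel hxT) hisel hxr
        exact this ▸ hxT
      · intro hiT
        have hisel := hTsel hiT
        rw [mem_Sel] at hisel
        exact ⟨hisel, i, hiT, rfl⟩
    rw [Finset.mem_coe, Finset.mem_filter, Finset.mem_powersetCard]
    have himgcard : (T.image (rnk (Sel (Hd s) S))).card = j := by
      rw [Finset.card_image_of_injOn (fun x hx y hy hxy =>
        rnk_injOn (hTsel hx) (hTsel hy) hxy), hTcard]
    refine ⟨⟨?_, himgcard⟩, ?_, ?_⟩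
    · intro x hx
      obtain ⟨i, hi, rfl⟩ := Finset.mem_image.1 hx
      exact Finset.mem_range.2 (Finset.mem_filter.1 (hTsub hi)).2.1
    · rw [hSelEq, hTcard]
    · intro x hx
      simp only [tau, Finset.mem_filter] at hx
      have hxsel := hx.1
      rw [hSelEq] at hxsel
      exact (Finset.mem_filter.1 (hTsub hxsel)).2.2
  · intro T₁ h₁ T₂ h₂ himg
    rw [Finset.mem_coe, Finset.mem_powersetCard] at h₁ h₂
    have hs₁ : T₁ ⊆ Sel (Hd s) S := h₁.1.trans (Finset.filter_subset _ _)
    have hs₂ : T₂ ⊆ Sel (Hd s) S := h₂.1.trans (Finset.filter_subset _ _)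
    have himg' : T₁.image (rnk (Sel (Hd s) S)) = T₂.image (rnk (Sel (Hd s) S)) := himg
    ext x
    constructor
    · intro hx
      have : rnk (Sel (Hd s) S) x ∈ T₂.image (rnk (Sel (Hd s) S)) := by
        rw [← himg']; exact Finset.mem_image_of_mem _ hx
      obtain ⟨y, hy, hye⟩ := Finset.mem_image.1 this
      exact (rnk_injOn (hs₂ hy) (hs₁ hx) hye) ▸ hy
    · intro hx
      have : rnk (Sel (Hd s) S) x ∈ T₁.image (rnk (Sel (Hd s) S)) := by
        rw [himg']; exact Finset.mem_image_of_mem _ hx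
      obtain ⟨y, hy, hye⟩ := Finset.mem_image.1 this
      exact (rnk_injOn (hs₁ hy) (hs₂ hx) hye) ▸ hy

lemma perS_lower {S : Finset (Fin ν)} (hk : k ≤ (ZS s S m).card) (hjk : j ≤ k) :
    k.choose j ≤ ((Finset.powersetCard j (Finset.range m)).filter
      (fun K => j ≤ (Sel (ruleK s K) S).card ∧ Disjoint (tau (ruleK s K) j S) S)).card := by
  have h1 : k.choose j ≤ (ZS s S m).card.choose j := Nat.choose_le_choose j hk
  rw [← Finset.card_powersetCard j (ZS s S m)] at h1
  refine le_trans h1 (Finset.card_le_card_of_injOn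
    (fun T => T.image (rnk (Sel (Hd s) S))) ?_ ?_)
  · intro T hT
    rw [Finset.mem_coe, Finset.mem_powersetCard] at hT
    obtain ⟨hTsub, hTcard⟩ := hT
    have hTsel : T ⊆ Sel (Hd s) S := hTsub.trans (Finset.filter_subset _ _)
    have hSelEq : Sel (ruleK s (T.image (rnk (Sel (Hd s) S)))) S = T := by
      ext i
      simp only [Sel, ruleK, Finset.mem_filter, Finset.mem_univ, true_and,
        Bool.and_eq_true, decide_eq_true_eq, Finset.mem_image]
      constructor
      · rintro ⟨hhd, x, hxT, hxr⟩
        have hisel : i ∈ Sel (Hd s) S := by simp [Sel, hhd]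
        have := rnk_injOn (hTsel hxT) hisel hxr
        exact this ▸ hxT
      · intro hiT
        have hisel := hTsel hiT
        rw [mem_Sel] at hisel
        exact ⟨hisel, i, hiT, rfl⟩
    rw [Finset.mem_coe, Finset.mem_filter, Finset.mem_powersetCard]
    have himgcard : (T.image (rnk (Sel (Hd s) S))).card = j := by
      rw [Finset.card_image_of_injOn (fun x hx y hy hxy =>
        rnk_injOn (hTsel hx) (hTsel hy) hxy), hTcard]
    refine ⟨⟨?_, himgcard⟩, ?_, ?_⟩
    · intro x hx
      obtain ⟨i, hi, rfl⟩ := Finset.mem_image.1 hx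
      exact Finset.mem_range.2 (Finset.mem_filter.1 (hTsub hi)).2.1
    · rw [hSelEq, hTcard]
    · rw [Finset.disjoint_left]
      intro x hx hxS
      have hxT : x ∈ T := by
        have := Finset.filter_subset (fun i => rnk (Sel (ruleK s (T.image (rnk (Sel (Hd s) S)))) S) i < j) _ hx
        rw [hSelEq] at this
        exact this
      exact (Finset.mem_filter.1 (hTsub hxT)).2.2 hxS
  · intro T₁ h₁ T₂ h₂ himg
    rw [Finset.mem_coe, Finset.mem_powersetCard] at h₁ h₂
    have hs₁ : T₁ ⊆ Sel (Hd s) S := h₁.1.trans (Finset.filter_subset _ _)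
    have hs₂ : T₂ ⊆ Sel (Hd s) S := h₂.1.trans (Finset.filter_subset _ _)
    have himg' : T₁.image (rnk (Sel (Hd s) S)) = T₂.image (rnk (Sel (Hd s) S)) := himg
    ext x
    constructor
    · intro hx
      have : rnk (Sel (Hd s) S) x ∈ T₂.image (rnk (Sel (Hd s) S)) := by
        rw [← himg']; exact Finset.mem_image_of_mem _ hx
      obtain ⟨y, hy, hye⟩ := Finset.mem_image.1 this
      exact (rnk_injOn (hs₂ hy) (hs₁ hx) hye) ▸ hy
    · intro hx
      have : rnk (Sel (Hd s) S) x ∈ T₁.image (rnk (Sel (Hd s) S)) := by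
        rw [himg']; exact Finset.mem_image_of_mem _ hx
      obtain ⟨y, hy, hye⟩ := Finset.mem_image.1 this
      exact (rnk_injOn (hs₁ hy) (hs₂ hx) hye) ▸ hy

end Game

section Count
variable (s : (i : Fin ν) → (Fin (i : ℕ) → Bool) → Bool)

lemma count_upper (j aa m k : ℕ) (hjk : j ≤ k) :
    ((Finset.powersetCard aa (Finset.univ : Finset (Fin ν))).filter
       (fun S => k ≤ (YS s S m).card)).card * k.choose j
      ≤ m.choose j * (ν - j).choose (aa - j) := by
  classical
  set 𝒜 := Finset.powersetCard aa (Finset.univ : Finset (Fin ν)) with h𝒜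
  set cond : Finset ℕ → Finset (Fin ν) → Prop :=
    fun K S => j ≤ (Sel (ruleK s K) S).card ∧ tau (ruleK s K) j S ⊆ S with hcond
  calc (𝒜.filter (fun S => k ≤ (YS s S m).card)).card * k.choose j
      = ∑ _S ∈ 𝒜.filter (fun S => k ≤ (YS s S m).card), k.choose j := by
        rw [Finset.sum_const, smul_eq_mul]
    _ ≤ ∑ S ∈ 𝒜.filter (fun S => k ≤ (YS s S m).card),
        ((Finset.powersetCard j (Finset.range m)).filter (fun K => cond K S)).card := by
        apply Finset.sum_le_sum
        intro S hS
        exact perS_upper s (Finset.mem_filter.1 hS).2 hjk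
    _ ≤ ∑ S ∈ 𝒜,
        ((Finset.powersetCard j (Finset.range m)).filter (fun K => cond K S)).card := by
        apply Finset.sum_le_sum_of_subset (Finset.filter_subset _ _)
    _ = ∑ S ∈ 𝒜, ∑ K ∈ Finset.powersetCard j (Finset.range m),
          if cond K S then 1 else 0 := by
        apply Finset.sum_congr rfl
        intro S _
        rw [Finset.card_filter]
    _ = ∑ K ∈ Finset.powersetCard j (Finset.range m), ∑ S ∈ 𝒜,
          if cond K S then 1 else 0 := Finset.sum_comm
    _ = ∑ K ∈ Finset.powersetCard j (Finset.range m),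
          (𝒜.filter (fun S => cond K S)).card := by
        apply Finset.sum_congr rfl
        intro K _
        rw [Finset.card_filter]
    _ ≤ ∑ _K ∈ Finset.powersetCard j (Finset.range m), (ν - j).choose (aa - j) := by
        apply Finset.sum_le_sum
        intro K _
        exact card_upper (ruleK_pred s K) j aa
    _ = m.choose j * (ν - j).choose (aa - j) := by
        rw [Finset.sum_const, smul_eq_mul, Finset.card_powersetCard, Finset.card_range]

lemma count_lower (j aa m k : ℕ) (hjk : j ≤ k) :
    ((Finset.powersetCard aa (Finset.univ : Finset (Fin ν))).filter
       (fun S => k ≤ (ZS s S m).card)).card * k.choose j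
      ≤ m.choose j * (ν - j).choose aa := by
  classical
  set 𝒜 := Finset.powersetCard aa (Finset.univ : Finset (Fin ν)) with h𝒜
  set cond : Finset ℕ → Finset (Fin ν) → Prop :=
    fun K S => j ≤ (Sel (ruleK s K) S).card ∧ Disjoint (tau (ruleK s K) j S) S with hcond
  calc (𝒜.filter (fun S => k ≤ (ZS s S m).card)).card * k.choose j
      = ∑ _S ∈ 𝒜.filter (fun S => k ≤ (ZS s S m).card), k.choose j := by
        rw [Finset.sum_const, smul_eq_mul]
    _ ≤ ∑ S ∈ 𝒜.filter (fun S => k ≤ (ZS s S m).card),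
        ((Finset.powersetCard j (Finset.range m)).filter (fun K => cond K S)).card := by
        apply Finset.sum_le_sum
        intro S hS
        exact perS_lower s (Finset.mem_filter.1 hS).2 hjk
    _ ≤ ∑ S ∈ 𝒜,
        ((Finset.powersetCard j (Finset.range m)).filter (fun K => cond K S)).card := by
        apply Finset.sum_le_sum_of_subset (Finset.filter_subset _ _)
    _ = ∑ S ∈ 𝒜, ∑ K ∈ Finset.powersetCard j (Finset.range m),
          if cond K S then 1 else 0 := by
        apply Finset.sum_congr rfl
        intro S _
        rw [Finset.card_filter]
    _ = ∑ K ∈ Finset.powersetCard j (Finset.range m), ∑ S ∈ 𝒜,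
          if cond K S then 1 else 0 := Finset.sum_comm
    _ = ∑ K ∈ Finset.powersetCard j (Finset.range m),
          (𝒜.filter (fun S => cond K S)).card := by
        apply Finset.sum_congr rfl
        intro K _
        rw [Finset.card_filter]
    _ ≤ ∑ _K ∈ Finset.powersetCard j (Finset.range m), (ν - j).choose aa := by
        apply Finset.sum_le_sum
        intro K _
        exact card_lower (ruleK_pred s K) j aa
    _ = m.choose j * (ν - j).choose aa := by
        rw [Finset.sum_const, smul_eq_mul, Finset.card_powersetCard, Finset.card_range]

end Count

section Casts

lemma cast_descFactorial_prod (n j : ℕ) :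
    (n.descFactorial j : ℝ) = ∏ i ∈ Finset.range j, ((n : ℝ) - i) := by
  by_cases h : j ≤ n
  · rw [Nat.descFactorial_eq_prod_range]
    push_cast
    apply Finset.prod_congr rfl
    intro i hi
    have hij := Finset.mem_range.1 hi
    rw [Nat.cast_sub (by omega : i ≤ n)]
  · push_neg at h
    rw [Nat.descFactorial_eq_zero_iff_lt.2 h, Nat.cast_zero]
    symm
    apply Finset.prod_eq_zero (Finset.mem_range.2 h)
    simp

lemma cast_choose_mul_factorial (n j : ℕ) :
    (n.choose j : ℝ) * (j.factorial : ℝ) = ∏ i ∈ Finset.range j, ((n : ℝ) - i) := by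
  rw [← cast_descFactorial_prod, Nat.descFactorial_eq_factorial_mul_choose]
  push_cast
  ring

lemma cast_descFactorial_div {n j : ℕ} (h : j ≤ n) :
    (n.descFactorial j : ℝ) = (n.factorial : ℝ) / ((n - j).factorial : ℝ) := by
  rw [eq_div_iff (by exact_mod_cast (n - j).factorial_ne_zero)]
  rw [← Nat.cast_mul, mul_comm, Nat.factorial_mul_descFactorial h]

lemma choose_ratio_upper {j a ν : ℕ} (hja : j ≤ a) (haν : a ≤ ν) :
    ((ν - j).choose (a - j) : ℝ) * (ν.descFactorial j : ℝ)
      = (ν.choose a : ℝ) * (a.descFactorial j : ℝ) := by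
  have h1 : (ν - j) - (a - j) = ν - a := by omega
  rw [Nat.cast_choose ℝ (by omega : a - j ≤ ν - j), Nat.cast_choose ℝ haν,
    cast_descFactorial_div (by omega : j ≤ ν), cast_descFactorial_div hja, h1]
  have f1 : ((a - j).factorial : ℝ) ≠ 0 := by exact_mod_cast (a - j).factorial_ne_zero
  have f2 : ((ν - a).factorial : ℝ) ≠ 0 := by exact_mod_cast (ν - a).factorial_ne_zero
  have f3 : ((ν - j).factorial : ℝ) ≠ 0 := by exact_mod_cast (ν - j).factorial_ne_zero
  have f4 : (a.factorial : ℝ) ≠ 0 := by exact_mod_cast a.factorial_ne_zero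
  field_simp

lemma choose_ratio_lower {j a ν : ℕ} (hja : j ≤ ν - a) (haν : a ≤ ν) :
    ((ν - j).choose a : ℝ) * (ν.descFactorial j : ℝ)
      = (ν.choose a : ℝ) * ((ν - a).descFactorial j : ℝ) := by
  have h1 : (ν - j) - a = (ν - a) - j := by omega
  rw [Nat.cast_choose ℝ (by omega : a ≤ ν - j), Nat.cast_choose ℝ haν,
    cast_descFactorial_div (by omega : j ≤ ν), cast_descFactorial_div hja, h1]
  have f1 : (((ν - a) - j).factorial : ℝ) ≠ 0 := by exact_mod_cast ((ν - a) - j).factorial_ne_zero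
  have f2 : ((ν - a).factorial : ℝ) ≠ 0 := by exact_mod_cast (ν - a).factorial_ne_zero
  have f3 : ((ν - j).factorial : ℝ) ≠ 0 := by exact_mod_cast (ν - j).factorial_ne_zero
  have f4 : (a.factorial : ℝ) ≠ 0 := by exact_mod_cast a.factorial_ne_zero
  field_simp

/-- `exp (u/5) ≤ 1 + u` for `0 ≤ u ≤ 4`. -/
lemma exp_fifth {u : ℝ} (h0 : 0 ≤ u) (h4 : u ≤ 4) : Real.exp (u / 5) ≤ 1 + u := by
  have h1 : 1 - u / 5 ≤ Real.exp (-(u / 5)) := by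
    have := Real.add_one_le_exp (-(u / 5))
    linarith
  have h2 : 0 < 1 - u / 5 := by linarith
  have h3 : Real.exp (u / 5) * (1 - u / 5) ≤ 1 := by
    calc Real.exp (u / 5) * (1 - u / 5) ≤ Real.exp (u / 5) * Real.exp (-(u / 5)) := by
          apply mul_le_mul_of_nonneg_left h1 (le_of_lt (Real.exp_pos _))
      _ = 1 := by rw [← Real.exp_add]; simp
  nlinarith [Real.exp_pos (u / 5)]

end Casts

section PerM
variable (s : (i : Fin ν) → (Fin (i : ℕ) → Bool) → Bool)

set_option maxHeartbeats 1000000 in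
lemma per_m_upper (a m k j : ℕ) (t : ℝ) (ha : 0 < a) (ha2 : 2 * a ≤ ν)
    (hm1 : 1 ≤ m) (hmν : m ≤ ν) (ht : 0 < t) (ht' : t < (a : ℝ) / ν)
    (hk_lb : ((a : ℝ)/ν + t) * m ≤ (k:ℝ)) (hkm : k ≤ m)
    (hj_lb : t * m / 2 ≤ (j:ℝ)) (hj_ub : (j:ℝ) < t * m / 2 + 1)
    (hja : j ≤ a) (hjk : j ≤ k) :
    (((Finset.powersetCard a (Finset.univ : Finset (Fin ν))).filter
       (fun S => k ≤ (YS s S m).card)).card : ℝ)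
      ≤ (ν.choose a : ℝ) * Real.exp (-((m : ℝ) * ν * t^2) / (20 * a)) := by
  have hν : 0 < ν := by omega
  have hνR : (0:ℝ) < ν := by exact_mod_cast hν
  have haR : (0:ℝ) < a := by exact_mod_cast ha
  have hmR : (1:ℝ) ≤ m := by exact_mod_cast hm1
  have hmνR : (m:ℝ) ≤ ν := by exact_mod_cast hmν
  have haνR : (a:ℝ) ≤ ν := by exact_mod_cast (by omega : a ≤ ν)
  set p : ℝ := (a:ℝ)/ν with hp_def
  have hp : 0 < p := by positivity
  have hp2 : p ≤ 1/2 := by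
    rw [hp_def, div_le_iff₀ hνR]
    have : (2*a : ℝ) ≤ ν := by exact_mod_cast ha2
    linarith
  have htp : t < p := ht'
  have hk_lb' : (p + t) * m ≤ (k:ℝ) := hk_lb
  have hjm : j ≤ m := le_trans hjk hkm
  -- the counting bound
  have hcount := count_upper s j a m k hjk
  have hcountR : (((Finset.powersetCard a (Finset.univ : Finset (Fin ν))).filter
       (fun S => k ≤ (YS s S m).card)).card : ℝ) * (k.choose j : ℝ)
      ≤ (m.choose j : ℝ) * ((ν - j).choose (a - j) : ℝ) := by
    exact_mod_cast hcount
  have hCk : (0:ℝ) < (k.choose j : ℝ) := by exact_mod_cast Nat.choose_pos hjk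
  -- the product inequality
  set u : ℝ := t / (2 * p) with hu_def
  have hu0 : 0 < u := by positivity
  have hu4 : u ≤ 4 := by
    rw [hu_def, div_le_iff₀ (by positivity)]
    nlinarith
  set w : ℝ := 1 / (1 + u) with hw_def
  have hw0 : 0 < w := by positivity
  have hprod : ∏ i ∈ Finset.range j, (((m:ℝ) - i) * ((a:ℝ) - i))
      ≤ ∏ i ∈ Finset.range j, (w * (((k:ℝ) - i) * ((ν:ℝ) - i))) := by
    apply Finset.prod_le_prod
    · intro i hi
      have hij : i < j := Finset.mem_range.1 hi
      have h1 : (i:ℝ) < j := by exact_mod_cast hij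
      have h2 : (i:ℝ) < m := by exact_mod_cast lt_of_lt_of_le hij hjm
      have h3 : (i:ℝ) < a := by exact_mod_cast lt_of_lt_of_le hij hja
      apply mul_nonneg <;> linarith
    · intro i hi
      have hij : i < j := Finset.mem_range.1 hi
      have hiR : (i:ℝ) < j := by exact_mod_cast hij
      have hi0 : (0:ℝ) ≤ i := Nat.cast_nonneg i
      have h2 : (i:ℝ) < m := by exact_mod_cast lt_of_lt_of_le hij hjm
      have h3 : (i:ℝ) < a := by exact_mod_cast lt_of_lt_of_le hij hja
      have h4 : (i:ℝ) < k := by exact_mod_cast lt_of_lt_of_le hij hjk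
      have h5 : (i:ℝ) < ν := by exact_mod_cast lt_of_lt_of_le hij (le_trans hjm hmν)
      have hiR1 : (i:ℝ) + 1 ≤ j := by exact_mod_cast hij
      have hitm : (i:ℝ) < t * m / 2 := by linarith
      -- fact A : (a - i) ≤ p * (ν - i)
      have hai : (a:ℝ)*i ≤ (ν:ℝ)*i := mul_le_mul_of_nonneg_right haνR hi0
      have factA : (a:ℝ) - i ≤ p * ((ν:ℝ) - i) := by
        rw [hp_def]
        rw [div_mul_eq_mul_div, le_div_iff₀ hνR]
        nlinarith [hai]
      -- fact B : (1 + u) * (p * (m - i)) ≤ k - i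
      have factB : (1 + u) * (p * ((m:ℝ) - i)) ≤ (k:ℝ) - i := by
        have hup : u * p = t / 2 := by
          rw [hu_def]
          field_simp
        have hexp : (1 + u) * (p * ((m:ℝ) - i))
            = p * ((m:ℝ) - i) + (u * p) * ((m:ℝ) - i) := by ring
        rw [hexp, hup]
        nlinarith [mul_nonneg hi0 hp.le, mul_nonneg hi0 ht.le]
      -- combine
      have hmi : (0:ℝ) ≤ (m:ℝ) - i := by linarith
      have hνi : (0:ℝ) ≤ (ν:ℝ) - i := by linarith
      have step1 : ((m:ℝ) - i) * ((a:ℝ) - i) ≤ ((m:ℝ) - i) * (p * ((ν:ℝ) - i)) :=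
        mul_le_mul_of_nonneg_left factA hmi
      have step2 : p * ((m:ℝ) - i) ≤ w * ((k:ℝ) - i) := by
        rw [hw_def, one_div, inv_mul_eq_div, le_div_iff₀ (by positivity : (0:ℝ) < 1 + u)]
        calc p * ((m:ℝ) - i) * (1 + u) = (1 + u) * (p * ((m:ℝ) - i)) := by ring
          _ ≤ (k:ℝ) - i := factB
      calc ((m:ℝ) - i) * ((a:ℝ) - i) ≤ ((m:ℝ) - i) * (p * ((ν:ℝ) - i)) := step1
        _ = (p * ((m:ℝ) - i)) * ((ν:ℝ) - i) := by ring
        _ ≤ (w * ((k:ℝ) - i)) * ((ν:ℝ) - i) := mul_le_mul_of_nonneg_right step2 hνi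
        _ = w * (((k:ℝ) - i) * ((ν:ℝ) - i)) := by ring
  -- turn products into binomials
  set A : ℝ := ∏ i ∈ Finset.range j, ((m:ℝ) - i) with hA_def
  set B : ℝ := ∏ i ∈ Finset.range j, ((k:ℝ) - i) with hB_def
  set C' : ℝ := ∏ i ∈ Finset.range j, ((a:ℝ) - i) with hC_def
  set D : ℝ := ∏ i ∈ Finset.range j, ((ν:ℝ) - i) with hD_def
  have hD0 : 0 < D := by
    rw [hD_def]
    apply Finset.prod_pos
    intro i hi
    have : (i:ℝ) < ν := by
      exact_mod_cast lt_of_lt_of_le (Finset.mem_range.1 hi) (le_trans hjm hmν)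
    linarith
  have hAC : A * C' ≤ w^j * (B * D) := by
    calc A * C' = ∏ i ∈ Finset.range j, (((m:ℝ) - i) * ((a:ℝ) - i)) := by
          rw [hA_def, hC_def, ← Finset.prod_mul_distrib]
      _ ≤ ∏ i ∈ Finset.range j, (w * (((k:ℝ) - i) * ((ν:ℝ) - i))) := hprod
      _ = w^j * (B * D) := by
          rw [Finset.prod_mul_distrib, Finset.prod_const, Finset.card_range,
            hB_def, hD_def, ← Finset.prod_mul_distrib]
  have hfac : (0:ℝ) < (j.factorial : ℝ) := by exact_mod_cast j.factorial_pos
  have e1 : (m.choose j : ℝ) * (j.factorial : ℝ) = A := cast_choose_mul_factorial m j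
  have e2 : (k.choose j : ℝ) * (j.factorial : ℝ) = B := cast_choose_mul_factorial k j
  have e3 : ((ν - j).choose (a - j) : ℝ) * D = (ν.choose a : ℝ) * C' := by
    rw [hD_def, hC_def, ← cast_descFactorial_prod, ← cast_descFactorial_prod]
    exact choose_ratio_upper hja (by omega)
  have key : (m.choose j : ℝ) * ((ν - j).choose (a - j) : ℝ)
      ≤ (k.choose j : ℝ) * ((ν.choose a : ℝ) * w^j) := by
    have hpos : (0:ℝ) < (j.factorial : ℝ) * D := by positivity
    apply le_of_mul_le_mul_right _ hpos
    calc (m.choose j : ℝ) * ((ν - j).choose (a - j) : ℝ) * ((j.factorial : ℝ) * D)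
        = ((m.choose j : ℝ) * (j.factorial : ℝ)) * (((ν - j).choose (a - j) : ℝ) * D) := by ring
      _ = A * ((ν.choose a : ℝ) * C') := by rw [e1, e3]
      _ = (ν.choose a : ℝ) * (A * C') := by ring
      _ ≤ (ν.choose a : ℝ) * (w^j * (B * D)) := by
          apply mul_le_mul_of_nonneg_left hAC (Nat.cast_nonneg _)
      _ = (k.choose j : ℝ) * ((ν.choose a : ℝ) * w^j) * ((j.factorial : ℝ) * D) := by
          rw [← e2]; ring
  -- exponential bound
  have hwexp : w ≤ Real.exp (-(u/5)) := by
    rw [hw_def, Real.exp_neg]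
    rw [one_div]
    apply inv_anti₀ (Real.exp_pos _)
    exact exp_fifth (le_of_lt hu0) hu4
  have hwj : w^j ≤ Real.exp (-((m : ℝ) * ν * t^2) / (20 * a)) := by
    have huj : (m : ℝ) * ν * t^2 / (20 * a) ≤ u * j / 5 := by
            have h1 : u * (t * m / 2) ≤ u * j := mul_le_mul_of_nonneg_left hj_lb (le_of_lt hu0)
            have h2 : u * (t * m / 2) = (m : ℝ) * ν * t^2 / (4 * a) := by
              rw [hu_def, hp_def]
              field_simp
              ring
            rw [h2] at h1
            have h3 : (m:ℝ) * ν * t^2 ≤ u * j * (4 * a) := by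
              rw [div_le_iff₀ (by positivity : (0:ℝ) < 4 * a)] at h1
              linarith
            rw [div_le_div_iff₀ (by positivity : (0:ℝ) < 20 * a) (by positivity : (0:ℝ) < 5)]
            nlinarith [h3]
    calc w^j ≤ (Real.exp (-(u/5)))^j := pow_le_pow_left₀ (le_of_lt hw0) hwexp j
      _ = Real.exp (-(u * j / 5)) := by
          rw [← Real.exp_nat_mul]
          congr 1
          ring
      _ ≤ Real.exp (-((m : ℝ) * ν * t^2 / (20 * a))) := Real.exp_le_exp.2 (neg_le_neg huj)
      _ = Real.exp (-((m : ℝ) * ν * t^2) / (20 * a)) := by rw [neg_div]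
  -- final chain
  have hfinal : (((Finset.powersetCard a (Finset.univ : Finset (Fin ν))).filter
       (fun S => k ≤ (YS s S m).card)).card : ℝ)
      ≤ (ν.choose a : ℝ) * w^j := by
    rw [← mul_le_mul_iff_of_pos_right hCk]
    calc (((Finset.powersetCard a (Finset.univ : Finset (Fin ν))).filter
        (fun S => k ≤ (YS s S m).card)).card : ℝ) * (k.choose j : ℝ)
        ≤ (m.choose j : ℝ) * ((ν - j).choose (a - j) : ℝ) := hcountR
      _ ≤ (k.choose j : ℝ) * ((ν.choose a : ℝ) * w^j) := key
      _ = (ν.choose a : ℝ) * w^j * (k.choose j : ℝ) := by ring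
  calc (((Finset.powersetCard a (Finset.univ : Finset (Fin ν))).filter
       (fun S => k ≤ (YS s S m).card)).card : ℝ)
      ≤ (ν.choose a : ℝ) * w^j := hfinal
    _ ≤ (ν.choose a : ℝ) * Real.exp (-((m : ℝ) * ν * t^2) / (20 * a)) := by
        apply mul_le_mul_of_nonneg_left hwj (Nat.cast_nonneg _)


set_option maxHeartbeats 1000000 in
lemma per_m_lower (a m k j : ℕ) (t : ℝ) (ha : 0 < a) (ha2 : 2 * a ≤ ν)
    (hm1 : 1 ≤ m) (hmν : m ≤ ν) (ht : 0 < t) (ht' : t < (a : ℝ) / ν)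
    (hk_lb : (1 - (a : ℝ)/ν + t) * m ≤ (k:ℝ)) (hkm : k ≤ m)
    (hj_lb : t * m * ν / (2 * a) ≤ (j:ℝ)) (hj_ub : (j:ℝ) < t * m * ν / (2 * a) + 1)
    (hja : j ≤ ν - a) (hjk : j ≤ k) :
    (((Finset.powersetCard a (Finset.univ : Finset (Fin ν))).filter
       (fun S => k ≤ (ZS s S m).card)).card : ℝ)
      ≤ (ν.choose a : ℝ) * Real.exp (-((m : ℝ) * ν * t^2) / (20 * a)) := by
  have hν : 0 < ν := by omega
  have hνR : (0:ℝ) < ν := by exact_mod_cast hν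
  have haR : (0:ℝ) < a := by exact_mod_cast ha
  have hmR : (1:ℝ) ≤ m := by exact_mod_cast hm1
  have hmνR : (m:ℝ) ≤ ν := by exact_mod_cast hmν
  have haνR : (a:ℝ) ≤ ν := by exact_mod_cast (by omega : a ≤ ν)
  set p : ℝ := (a:ℝ)/ν with hp_def
  have hp : 0 < p := by positivity
  have hp2 : p ≤ 1/2 := by
    rw [hp_def, div_le_iff₀ hνR]
    have : (2*a : ℝ) ≤ ν := by exact_mod_cast ha2
    linarith
  have htp : t < p := ht'
  have hjm : j ≤ m := le_trans hjk hkm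
  have hνaR : ((ν - a : ℕ) : ℝ) = (ν:ℝ) - a := by
    rw [Nat.cast_sub (by omega : a ≤ ν)]
  -- the counting bound
  have hcount := count_lower s j a m k hjk
  have hcountR : (((Finset.powersetCard a (Finset.univ : Finset (Fin ν))).filter
       (fun S => k ≤ (ZS s S m).card)).card : ℝ) * (k.choose j : ℝ)
      ≤ (m.choose j : ℝ) * ((ν - j).choose a : ℝ) := by
    exact_mod_cast hcount
  have hCk : (0:ℝ) < (k.choose j : ℝ) := by exact_mod_cast Nat.choose_pos hjk
  set u : ℝ := t / 2 with hu_def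
  have hu0 : 0 < u := by positivity
  have hu4 : u ≤ 4 := by rw [hu_def]; linarith
  set w : ℝ := 1 / (1 + u) with hw_def
  have hw0 : 0 < w := by positivity
  have hprod : ∏ i ∈ Finset.range j, (((m:ℝ) - i) * (((ν - a : ℕ):ℝ) - i))
      ≤ ∏ i ∈ Finset.range j, (w * (((k:ℝ) - i) * ((ν:ℝ) - i))) := by
    apply Finset.prod_le_prod
    · intro i hi
      have hij : i < j := Finset.mem_range.1 hi
      have h2 : (i:ℝ) < m := by exact_mod_cast lt_of_lt_of_le hij hjm
      have h3 : (i:ℝ) < ((ν - a : ℕ):ℝ) := by exact_mod_cast lt_of_lt_of_le hij hja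
      apply mul_nonneg <;> linarith
    · intro i hi
      have hij : i < j := Finset.mem_range.1 hi
      have hiR : (i:ℝ) < j := by exact_mod_cast hij
      have hi0 : (0:ℝ) ≤ i := Nat.cast_nonneg i
      have hiR1 : (i:ℝ) + 1 ≤ j := by exact_mod_cast hij
      have h2 : (i:ℝ) < m := by exact_mod_cast lt_of_lt_of_le hij hjm
      have h3 : (i:ℝ) < ((ν - a : ℕ):ℝ) := by exact_mod_cast lt_of_lt_of_le hij hja
      have h3' : (i:ℝ) < (ν:ℝ) - a := by rw [← hνaR]; exact h3
      have h4 : (i:ℝ) < k := by exact_mod_cast lt_of_lt_of_le hij hjk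
      have h5 : (i:ℝ) < ν := by exact_mod_cast lt_of_lt_of_le hij (le_trans hjm hmν)
      have hitm : (i:ℝ) < t * m * ν / (2 * a) := by linarith
      have hip : (i:ℝ) * p ≤ t * m / 2 := by
        have hq : (t * m * ν / (2 * a)) * p = t * m / 2 := by
          rw [hp_def]
          field_simp
        calc (i:ℝ) * p ≤ (t * m * ν / (2 * a)) * p :=
              mul_le_mul_of_nonneg_right (le_of_lt hitm) (le_of_lt hp)
          _ = t * m / 2 := hq
      have factA : ((ν - a : ℕ):ℝ) - i ≤ (1 - p) * ((ν:ℝ) - i) := by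
        rw [hνaR, hp_def]
        have expand : (1 - (a:ℝ)/ν) * ((ν:ℝ) - i) = ((ν:ℝ) - a) - i + (a:ℝ)/ν * i := by
          field_simp
          ring
        rw [expand]
        have : (0:ℝ) ≤ (a:ℝ)/ν * i := by positivity
        linarith
      have factB : (1 + u) * ((1 - p) * ((m:ℝ) - i)) ≤ (k:ℝ) - i := by
        have hexp : (1 + u) * ((1 - p) * ((m:ℝ) - i))
            = (1 - p) * ((m:ℝ) - i) + (t/2) * ((1 - p) * ((m:ℝ) - i)) := by
          rw [hu_def]; ring
        rw [hexp]
        have hb1 : (t/2) * ((1 - p) * ((m:ℝ) - i)) ≤ (t/2) * m := by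
          apply mul_le_mul_of_nonneg_left _ (by positivity)
          nlinarith [mul_nonneg hi0 hp.le]
        have hb2 : (1 - p) * ((m:ℝ) - i) = (1 - p) * m - i + i * p := by ring
        have hk' : (1 - p + t) * m ≤ (k:ℝ) := hk_lb
        nlinarith [mul_nonneg hi0 ht.le]
      have hmi : (0:ℝ) ≤ (m:ℝ) - i := by linarith
      have hνi : (0:ℝ) ≤ (ν:ℝ) - i := by linarith
      have step1 : ((m:ℝ) - i) * (((ν - a : ℕ):ℝ) - i)
          ≤ ((m:ℝ) - i) * ((1 - p) * ((ν:ℝ) - i)) :=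
        mul_le_mul_of_nonneg_left factA hmi
      have step2 : (1 - p) * ((m:ℝ) - i) ≤ w * ((k:ℝ) - i) := by
        rw [hw_def, one_div, inv_mul_eq_div, le_div_iff₀ (by positivity : (0:ℝ) < 1 + u)]
        calc (1 - p) * ((m:ℝ) - i) * (1 + u) = (1 + u) * ((1 - p) * ((m:ℝ) - i)) := by ring
          _ ≤ (k:ℝ) - i := factB
      calc ((m:ℝ) - i) * (((ν - a : ℕ):ℝ) - i) ≤ ((m:ℝ) - i) * ((1 - p) * ((ν:ℝ) - i)) := step1
        _ = ((1 - p) * ((m:ℝ) - i)) * ((ν:ℝ) - i) := by ring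
        _ ≤ (w * ((k:ℝ) - i)) * ((ν:ℝ) - i) := mul_le_mul_of_nonneg_right step2 hνi
        _ = w * (((k:ℝ) - i) * ((ν:ℝ) - i)) := by ring
  set A : ℝ := ∏ i ∈ Finset.range j, ((m:ℝ) - i) with hA_def
  set B : ℝ := ∏ i ∈ Finset.range j, ((k:ℝ) - i) with hB_def
  set C' : ℝ := ∏ i ∈ Finset.range j, (((ν - a : ℕ):ℝ) - i) with hC_def
  set D : ℝ := ∏ i ∈ Finset.range j, ((ν:ℝ) - i) with hD_def
  have hD0 : 0 < D := by
    rw [hD_def]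
    apply Finset.prod_pos
    intro i hi
    have : (i:ℝ) < ν := by
      exact_mod_cast lt_of_lt_of_le (Finset.mem_range.1 hi) (le_trans hjm hmν)
    linarith
  have hAC : A * C' ≤ w^j * (B * D) := by
    calc A * C' = ∏ i ∈ Finset.range j, (((m:ℝ) - i) * (((ν - a : ℕ):ℝ) - i)) := by
          rw [hA_def, hC_def, ← Finset.prod_mul_distrib]
      _ ≤ ∏ i ∈ Finset.range j, (w * (((k:ℝ) - i) * ((ν:ℝ) - i))) := hprod
      _ = w^j * (B * D) := by
          rw [Finset.prod_mul_distrib, Finset.prod_const, Finset.card_range,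
            hB_def, hD_def, ← Finset.prod_mul_distrib]
  have hfac : (0:ℝ) < (j.factorial : ℝ) := by exact_mod_cast j.factorial_pos
  have e1 : (m.choose j : ℝ) * (j.factorial : ℝ) = A := cast_choose_mul_factorial m j
  have e2 : (k.choose j : ℝ) * (j.factorial : ℝ) = B := cast_choose_mul_factorial k j
  have e3 : ((ν - j).choose a : ℝ) * D = (ν.choose a : ℝ) * C' := by
    rw [hD_def, hC_def, ← cast_descFactorial_prod, ← cast_descFactorial_prod]
    exact choose_ratio_lower hja (by omega)
  have key : (m.choose j : ℝ) * ((ν - j).choose a : ℝ)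
      ≤ (k.choose j : ℝ) * ((ν.choose a : ℝ) * w^j) := by
    have hpos : (0:ℝ) < (j.factorial : ℝ) * D := by positivity
    apply le_of_mul_le_mul_right _ hpos
    calc (m.choose j : ℝ) * ((ν - j).choose a : ℝ) * ((j.factorial : ℝ) * D)
        = ((m.choose j : ℝ) * (j.factorial : ℝ)) * (((ν - j).choose a : ℝ) * D) := by ring
      _ = A * ((ν.choose a : ℝ) * C') := by rw [e1, e3]
      _ = (ν.choose a : ℝ) * (A * C') := by ring
      _ ≤ (ν.choose a : ℝ) * (w^j * (B * D)) := by
          apply mul_le_mul_of_nonneg_left hAC (Nat.cast_nonneg _)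
      _ = (k.choose j : ℝ) * ((ν.choose a : ℝ) * w^j) * ((j.factorial : ℝ) * D) := by
          rw [← e2]; ring
  have hwexp : w ≤ Real.exp (-(u/5)) := by
    rw [hw_def, Real.exp_neg]
    rw [one_div]
    apply inv_anti₀ (Real.exp_pos _)
    exact exp_fifth (le_of_lt hu0) hu4
  have hwj : w^j ≤ Real.exp (-((m : ℝ) * ν * t^2) / (20 * a)) := by
    have huj : (m : ℝ) * ν * t^2 / (20 * a) ≤ u * j / 5 := by
      have h1 : u * (t * m * ν / (2 * a)) ≤ u * j := mul_le_mul_of_nonneg_left hj_lb (le_of_lt hu0)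
      have h2 : u * (t * m * ν / (2 * a)) = (m : ℝ) * ν * t^2 / (4 * a) := by
        rw [hu_def]
        field_simp
        ring
      rw [h2] at h1
      have h3 : (m:ℝ) * ν * t^2 ≤ u * j * (4 * a) := by
        rw [div_le_iff₀ (by positivity : (0:ℝ) < 4 * a)] at h1
        linarith
      rw [div_le_div_iff₀ (by positivity : (0:ℝ) < 20 * a) (by positivity : (0:ℝ) < 5)]
      nlinarith [h3]
    calc w^j ≤ (Real.exp (-(u/5)))^j := pow_le_pow_left₀ (le_of_lt hw0) hwexp j
      _ = Real.exp (-(u * j / 5)) := by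
          rw [← Real.exp_nat_mul]
          congr 1
          ring
      _ ≤ Real.exp (-((m : ℝ) * ν * t^2 / (20 * a))) := Real.exp_le_exp.2 (neg_le_neg huj)
      _ = Real.exp (-((m : ℝ) * ν * t^2) / (20 * a)) := by rw [neg_div]
  have hfinal : (((Finset.powersetCard a (Finset.univ : Finset (Fin ν))).filter
       (fun S => k ≤ (ZS s S m).card)).card : ℝ)
      ≤ (ν.choose a : ℝ) * w^j := by
    rw [← mul_le_mul_iff_of_pos_right hCk]
    calc (((Finset.powersetCard a (Finset.univ : Finset (Fin ν))).filter
        (fun S => k ≤ (ZS s S m).card)).card : ℝ) * (k.choose j : ℝ)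
        ≤ (m.choose j : ℝ) * ((ν - j).choose a : ℝ) := hcountR
      _ ≤ (k.choose j : ℝ) * ((ν.choose a : ℝ) * w^j) := key
      _ = (ν.choose a : ℝ) * w^j * (k.choose j : ℝ) := by ring
  calc (((Finset.powersetCard a (Finset.univ : Finset (Fin ν))).filter
       (fun S => k ≤ (ZS s S m).card)).card : ℝ)
      ≤ (ν.choose a : ℝ) * w^j := hfinal
    _ ≤ (ν.choose a : ℝ) * Real.exp (-((m : ℝ) * ν * t^2) / (20 * a)) := by
        apply mul_le_mul_of_nonneg_left hwj (Nat.cast_nonneg _)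

end PerM

section Main
variable (s : (i : Fin ν) → (Fin (i : ℕ) → Bool) → Bool)

lemma h_le_nu (S : Finset (Fin ν)) : (Sel (Hd s) S).card ≤ ν := by
  calc (Sel (Hd s) S).card ≤ (Finset.univ : Finset (Fin ν)).card := Finset.card_le_univ _
    _ = ν := by simp

lemma YS_at_h (S : Finset (Fin ν)) :
    YS s S ((Sel (Hd s) S).card) = (Sel (Hd s) S).filter (· ∈ S) := by
  unfold YS
  apply Finset.filter_congr
  intro i hi
  simp only [and_iff_right_iff_imp]
  intro _
  exact rnk_lt hi

lemma ZS_at_h (S : Finset (Fin ν)) :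
    ZS s S ((Sel (Hd s) S).card) = (Sel (Hd s) S).filter (· ∉ S) := by
  unfold ZS
  apply Finset.filter_congr
  intro i hi
  simp only [and_iff_right_iff_imp]
  intro _
  exact rnk_lt hi

lemma hA_split (S : Finset (Fin ν)) :
    ((Sel (Hd s) S).filter (· ∈ S)).card + ((Sel (Hd s) S).filter (· ∉ S)).card
      = (Sel (Hd s) S).card := Finset.card_filter_add_card_filter_not _

set_option maxHeartbeats 2000000 in
lemma count_bad (a ν₀ : ℕ) (t : ℝ) (ha : 0 < a) (hν₀pos : 0 < ν₀)
    (ha2 : 2 * a ≤ ν) (hν₀ : ν₀ ≤ ν) (ht : 0 < t) (ht' : t < (a : ℝ) / ν) :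
    (((Finset.powersetCard a (Finset.univ : Finset (Fin ν))).filter
        (fun S => ν₀ ≤ (Sel (Hd s) S).card ∧
          t * ((Sel (Hd s) S).card : ℝ) ≤
            |(((Sel (Hd s) S).filter (· ∈ S)).card : ℝ)
              - (a : ℝ) * ((Sel (Hd s) S).card : ℝ) / ν|)).card : ℝ)
      ≤ (ν.choose a : ℝ) * (80 * Real.sqrt ν / t ^ 2 *
          Real.exp (-((ν₀ : ℝ) * ν * t ^ 2) / (20 * a))) := by
  classical
  have hν : 0 < ν := by omega
  have hνR : (0:ℝ) < ν := by exact_mod_cast hν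
  have haR : (0:ℝ) < a := by exact_mod_cast ha
  have haνR : (a:ℝ) ≤ ν := by exact_mod_cast (by omega : a ≤ ν)
  have hp2 : (a:ℝ)/ν ≤ 1/2 := by
    rw [div_le_iff₀ hνR]
    have : (2*a : ℝ) ≤ ν := by exact_mod_cast ha2
    linarith
  have hthalf : t < 1/2 := lt_of_lt_of_le ht' hp2
  set 𝒜 := Finset.powersetCard a (Finset.univ : Finset (Fin ν)) with h𝒜
  set kup : ℕ → ℕ := fun m => Nat.ceil (((a:ℝ)/ν + t) * m) with hkup
  set kdn : ℕ → ℕ := fun m => Nat.ceil ((1 - (a:ℝ)/ν + t) * m) with hkdn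
  set BadF := 𝒜.filter
        (fun S => ν₀ ≤ (Sel (Hd s) S).card ∧
          t * ((Sel (Hd s) S).card : ℝ) ≤
            |(((Sel (Hd s) S).filter (· ∈ S)).card : ℝ)
              - (a : ℝ) * ((Sel (Hd s) S).card : ℝ) / ν|) with hBadF
  -- step 3a : decomposition
  have hdecomp : BadF ⊆ (Finset.Icc ν₀ ν).biUnion (fun m =>
      (𝒜.filter (fun S => kup m ≤ (YS s S m).card))
        ∪ (𝒜.filter (fun S => kdn m ≤ (ZS s S m).card))) := by
    intro S hS
    rw [hBadF, Finset.mem_filter] at hS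
    obtain ⟨hS𝒜, hν₀S, habs⟩ := hS
    set m := (Sel (Hd s) S).card with hm
    set hA := ((Sel (Hd s) S).filter (· ∈ S)).card with hhA
    have hmν : m ≤ ν := h_le_nu s S
    have hAm : hA ≤ m := Finset.card_filter_le _ _
    rw [Finset.mem_biUnion]
    refine ⟨m, Finset.mem_Icc.2 ⟨hν₀S, hmν⟩, ?_⟩
    rw [Finset.mem_union]
    rcases abs_cases (((hA : ℝ)) - (a : ℝ) * (m : ℝ) / ν) with ⟨heq, _⟩ | ⟨heq, _⟩
    · left
      rw [Finset.mem_filter]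
      refine ⟨hS𝒜, ?_⟩
      have hYS : YS s S m = (Sel (Hd s) S).filter (· ∈ S) := YS_at_h s S
      rw [hYS, ← hhA]
      apply Nat.ceil_le.2
      rw [heq] at habs
      push_cast
      have e : ((a:ℝ)/(ν:ℝ) + t) * (m:ℝ) = (a:ℝ)*(m:ℝ)/(ν:ℝ) + t*(m:ℝ) := by ring
      rw [e]
      linarith
    · right
      rw [Finset.mem_filter]
      refine ⟨hS𝒜, ?_⟩
      have hZS : ZS s S m = (Sel (Hd s) S).filter (· ∉ S) := ZS_at_h s S
      have hsplit := hA_split s S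
      rw [← hm, ← hhA] at hsplit
      rw [hZS]
      have hZcard : ((Sel (Hd s) S).filter (· ∉ S)).card = m - hA := by omega
      rw [hZcard]
      apply Nat.ceil_le.2
      rw [heq] at habs
      have hcast : ((m - hA : ℕ) : ℝ) = (m : ℝ) - hA := by
        rw [Nat.cast_sub hAm]
      rw [hcast]
      push_cast
      have e : (1 - (a:ℝ)/(ν:ℝ) + t) * (m:ℝ)
          = (m:ℝ) - (a:ℝ)*(m:ℝ)/(ν:ℝ) + t*(m:ℝ) := by ring
      rw [e]
      linarith
  -- step 3b : card bound
  have h3b : (BadF.card : ℝ) ≤ ∑ m ∈ Finset.Icc ν₀ ν,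
      (((𝒜.filter (fun S => kup m ≤ (YS s S m).card)).card : ℝ)
        + ((𝒜.filter (fun S => kdn m ≤ (ZS s S m).card)).card : ℝ)) := by
    have h1 : BadF.card ≤ ∑ m ∈ Finset.Icc ν₀ ν,
        ((𝒜.filter (fun S => kup m ≤ (YS s S m).card))
          ∪ (𝒜.filter (fun S => kdn m ≤ (ZS s S m).card))).card :=
      le_trans (Finset.card_le_card hdecomp) (Finset.card_biUnion_le)
    have h2 : ∀ m ∈ Finset.Icc ν₀ ν,
        (((𝒜.filter (fun S => kup m ≤ (YS s S m).card))
          ∪ (𝒜.filter (fun S => kdn m ≤ (ZS s S m).card))).card : ℝ)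
        ≤ ((𝒜.filter (fun S => kup m ≤ (YS s S m).card)).card : ℝ)
          + ((𝒜.filter (fun S => kdn m ≤ (ZS s S m).card)).card : ℝ) := by
      intro m _
      exact_mod_cast Finset.card_union_le _ _
    calc (BadF.card : ℝ) ≤ (∑ m ∈ Finset.Icc ν₀ ν,
        ((𝒜.filter (fun S => kup m ≤ (YS s S m).card))
          ∪ (𝒜.filter (fun S => kdn m ≤ (ZS s S m).card))).card : ℕ) := by exact_mod_cast h1
      _ = ∑ m ∈ Finset.Icc ν₀ ν, (((𝒜.filter (fun S => kup m ≤ (YS s S m).card))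
          ∪ (𝒜.filter (fun S => kdn m ≤ (ZS s S m).card))).card : ℝ) := by push_cast; rfl
      _ ≤ _ := Finset.sum_le_sum h2
  -- step 3c : per-m bounds
  have h3c : ∀ m ∈ Finset.Icc ν₀ ν,
      ((𝒜.filter (fun S => kup m ≤ (YS s S m).card)).card : ℝ)
        + ((𝒜.filter (fun S => kdn m ≤ (ZS s S m).card)).card : ℝ)
      ≤ 2 * (ν.choose a : ℝ) * Real.exp (-((m : ℝ) * ν * t^2) / (20 * a)) := by
    intro m hmIcc
    rw [Finset.mem_Icc] at hmIcc
    obtain ⟨hm1', hmν⟩ := hmIcc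
    have hm1 : 1 ≤ m := le_trans hν₀pos hm1'
    have hmR : (1:ℝ) ≤ m := by exact_mod_cast hm1
    have hmνR : (m:ℝ) ≤ ν := by exact_mod_cast hmν
    have htν : t * ν < a := by
      calc t * ν < ((a:ℝ)/ν) * ν := by nlinarith
        _ = a := by field_simp
    -- upper
    have hup : ((𝒜.filter (fun S => kup m ≤ (YS s S m).card)).card : ℝ)
        ≤ (ν.choose a : ℝ) * Real.exp (-((m : ℝ) * ν * t^2) / (20 * a)) := by
      apply per_m_upper s a m (kup m) (Nat.ceil (t * m / 2)) t ha ha2 hm1 hmν ht ht'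
      · exact Nat.le_ceil _
      · rw [hkup]
        apply Nat.ceil_le.2
        have e : ((a:ℝ)/(ν:ℝ) + t) * (m:ℝ) ≤ 1 * (m:ℝ) := by
          apply mul_le_mul_of_nonneg_right _ (Nat.cast_nonneg m)
          linarith
        linarith
      · exact Nat.le_ceil _
      · exact Nat.ceil_lt_add_one (by positivity)
      · apply Nat.ceil_le.2
        have h1 : t * (m:ℝ) ≤ t * (ν:ℝ) := mul_le_mul_of_nonneg_left hmνR (le_of_lt ht)
        linarith
      · apply Nat.ceil_le_ceil
        have e : ((a:ℝ)/(ν:ℝ) + t) * (m:ℝ) = ((a:ℝ)/(ν:ℝ)) * (m:ℝ) + t*(m:ℝ) := by ring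
        rw [e]
        have h1 : (0:ℝ) ≤ ((a:ℝ)/(ν:ℝ)) * (m:ℝ) := by positivity
        have h2 : (0:ℝ) ≤ t * (m:ℝ) := by positivity
        linarith
    -- lower
    have hdn : ((𝒜.filter (fun S => kdn m ≤ (ZS s S m).card)).card : ℝ)
        ≤ (ν.choose a : ℝ) * Real.exp (-((m : ℝ) * ν * t^2) / (20 * a)) := by
      have hd1 : t * m * ν / (2 * a) ≤ (m:ℝ)/2 := by
        rw [div_le_div_iff₀ (by positivity) (by norm_num)]
        have h1 : (m:ℝ) * (t * ν) ≤ (m:ℝ) * a :=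
          mul_le_mul_of_nonneg_left (le_of_lt htν) (Nat.cast_nonneg m)
        nlinarith [h1]
      apply per_m_lower s a m (kdn m) (Nat.ceil (t * m * ν / (2 * a))) t ha ha2 hm1 hmν ht ht'
      · exact Nat.le_ceil _
      · rw [hkdn]
        apply Nat.ceil_le.2
        have e : (1 - (a:ℝ)/(ν:ℝ) + t) * (m:ℝ)
            = (m:ℝ) - ((a:ℝ)/(ν:ℝ)) * (m:ℝ) + t*(m:ℝ) := by ring
        rw [e]
        have h1 : t * (m:ℝ) ≤ ((a:ℝ)/(ν:ℝ)) * (m:ℝ) :=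
          mul_le_mul_of_nonneg_right (le_of_lt ht') (Nat.cast_nonneg m)
        linarith
      · exact Nat.le_ceil _
      · exact Nat.ceil_lt_add_one (by positivity)
      · apply Nat.ceil_le.2
        have hcast : ((ν - a : ℕ) : ℝ) = (ν:ℝ) - a := by
          rw [Nat.cast_sub (by omega : a ≤ ν)]
        rw [hcast]
        have : (m:ℝ)/2 ≤ (ν:ℝ) - a := by
          have : (2*a : ℝ) ≤ ν := by exact_mod_cast ha2
          linarith
        linarith
      · rw [hkdn]
        apply Nat.ceil_le_ceil
        have hd2 : (m:ℝ)/2 ≤ (1 - (a:ℝ)/ν + t) * m := by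
          have e : (1 - (a:ℝ)/(ν:ℝ) + t) * (m:ℝ)
              = (m:ℝ) - ((a:ℝ)/(ν:ℝ)) * (m:ℝ) + t*(m:ℝ) := by ring
          rw [e]
          have h1 : ((a:ℝ)/(ν:ℝ)) * (m:ℝ) ≤ (1/2) * (m:ℝ) :=
            mul_le_mul_of_nonneg_right hp2 (Nat.cast_nonneg m)
          have h2 : (0:ℝ) ≤ t * (m:ℝ) := by positivity
          linarith
        linarith
    linarith
  -- step 3d : geometric sum
  set c : ℝ := (ν:ℝ) * t^2 / (20 * a) with hc
  have hc0 : 0 < c := by positivity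
  set x : ℝ := Real.exp (-c) with hx
  have hx0 : 0 < x := Real.exp_pos _
  have hx1 : x < 1 := by
    rw [hx, Real.exp_lt_one_iff]
    linarith
  have hEm : ∀ m : ℕ, Real.exp (-((m : ℝ) * ν * t^2) / (20 * a)) = x^m := by
    intro m
    rw [hx, ← Real.exp_nat_mul]
    congr 1
    rw [hc]
    field_simp
  have hgeom : ∑ m ∈ Finset.Icc ν₀ ν, x^m ≤ x^ν₀ / (1 - x) := by
    have h1 : ∑ m ∈ Finset.Icc ν₀ ν, x^m = ∑ i ∈ Finset.range (ν + 1 - ν₀), x^(ν₀ + i) := by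
      rw [← Finset.Ico_add_one_right_eq_Icc, Finset.sum_Ico_eq_sum_range]
    rw [h1]
    have h2 : ∀ i ∈ Finset.range (ν + 1 - ν₀), x^(ν₀ + i) = x^ν₀ * x^i := fun i _ => pow_add x ν₀ i
    rw [Finset.sum_congr rfl h2, ← Finset.mul_sum]
    have h3 : ∑ i ∈ Finset.range (ν + 1 - ν₀), x^i ≤ 1 / (1 - x) := by
      have h4 := geom_sum_eq (ne_of_lt hx1) (ν + 1 - ν₀)
      have h4' : (x^(ν + 1 - ν₀) - 1)/(x - 1) = (1 - x^(ν + 1 - ν₀))/(1 - x) := by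
        rw [div_eq_div_iff (sub_ne_zero.2 (ne_of_lt hx1)) (sub_ne_zero.2 (ne_of_gt hx1))]
        ring
      rw [h4, h4']
      rw [div_le_div_iff₀ (by linarith) (by linarith)]
      have h5 : (0:ℝ) ≤ x^(ν + 1 - ν₀) := le_of_lt (pow_pos hx0 _)
      nlinarith
    calc x^ν₀ * ∑ i ∈ Finset.range (ν + 1 - ν₀), x^i ≤ x^ν₀ * (1 / (1 - x)) := by
          apply mul_le_mul_of_nonneg_left h3 (le_of_lt (pow_pos hx0 _))
      _ = x^ν₀ / (1 - x) := by ring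
  -- combine
  have hchain : (BadF.card : ℝ) ≤ 2 * (ν.choose a : ℝ) * (x^ν₀ / (1 - x)) := by
    calc (BadF.card : ℝ) ≤ ∑ m ∈ Finset.Icc ν₀ ν,
        (((𝒜.filter (fun S => kup m ≤ (YS s S m).card)).card : ℝ)
          + ((𝒜.filter (fun S => kdn m ≤ (ZS s S m).card)).card : ℝ)) := h3b
      _ ≤ ∑ m ∈ Finset.Icc ν₀ ν, 2 * (ν.choose a : ℝ) * Real.exp (-((m : ℝ) * ν * t^2) / (20 * a)) :=
          Finset.sum_le_sum h3c
      _ = 2 * (ν.choose a : ℝ) * ∑ m ∈ Finset.Icc ν₀ ν, x^m := by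
          rw [Finset.mul_sum]
          apply Finset.sum_congr rfl
          intro m _
          rw [hEm m]
      _ ≤ 2 * (ν.choose a : ℝ) * (x^ν₀ / (1 - x)) := by
          apply mul_le_mul_of_nonneg_left hgeom (by positivity)
  -- final numeric bound : 2 / (1 - x) ≤ 80 √ν / t²
  have hxc : x ≤ 1 / (1 + c) := by
    rw [hx]
    rw [Real.exp_neg]
    rw [one_div]
    apply inv_anti₀ (by linarith)
    have := Real.add_one_le_exp c
    linarith
  have h1x : c / (1 + c) ≤ 1 - x := by
    have : 1 - 1/(1+c) = c/(1+c) := by field_simp; ring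
    linarith
  have hfrac : 2 / (1 - x) ≤ 80 * Real.sqrt ν / t^2 := by
    have hs1 : (1:ℝ) ≤ Real.sqrt ν := by
      rw [Real.one_le_sqrt]
      exact_mod_cast hν
    have h2c : 2 / (1 - x) ≤ 2 * (1 + c) / c := by
      have hpos : (0:ℝ) < c/(1+c) := div_pos hc0 (by linarith)
      calc 2/(1-x) ≤ 2/(c/(1+c)) :=
            div_le_div_of_nonneg_left (by norm_num) hpos h1x
        _ = 2 * (1 + c) / c := by
            rw [div_div_eq_mul_div]
    have h2d : 2 * (1 + c) / c ≤ 80 / t^2 := by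
      have hge : (2 * a : ℝ) ≤ (ν:ℝ) := by exact_mod_cast ha2
      have hkey : t^2 / 10 ≤ c := by
        rw [hc, div_le_div_iff₀ (by norm_num) (by positivity)]
        have h7 : t^2 * (2*(a:ℝ)) ≤ t^2 * (ν:ℝ) :=
          mul_le_mul_of_nonneg_left hge (sq_nonneg t)
        nlinarith [h7]
      have hc20 : c ≤ 1 := by
        rw [hc, div_le_one (by positivity)]
        have htt : t * t ≤ ((a:ℝ)/ν) * ((a:ℝ)/ν) :=
          mul_le_mul (le_of_lt ht') (le_of_lt ht') (le_of_lt ht) (by positivity)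
        have h8 : (ν:ℝ) * (t*t) ≤ (ν:ℝ) * (((a:ℝ)/ν) * ((a:ℝ)/ν)) :=
          mul_le_mul_of_nonneg_left htt (le_of_lt hνR)
        have h9 : (ν:ℝ) * (((a:ℝ)/ν) * ((a:ℝ)/ν)) = (a:ℝ) * ((a:ℝ)/ν) := by
          field_simp
        have h10 : (a:ℝ) * ((a:ℝ)/ν) ≤ (a:ℝ) * (1/2) :=
          mul_le_mul_of_nonneg_left hp2 (le_of_lt haR)
        nlinarith [h8, h9, h10]
      rw [div_le_div_iff₀ hc0 (by positivity)]
      nlinarith [hkey, mul_le_mul_of_nonneg_right hc20 (sq_nonneg t)]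
    calc 2 / (1 - x) ≤ 2 * (1 + c) / c := h2c
      _ ≤ 80 / t^2 := h2d
      _ ≤ 80 * Real.sqrt ν / t^2 := by
          apply div_le_div_of_nonneg_right _ (by positivity)
          nlinarith
  have hfin : 2 * (ν.choose a : ℝ) * (x^ν₀ / (1 - x))
      ≤ (ν.choose a : ℝ) * (80 * Real.sqrt ν / t ^ 2 *
          Real.exp (-((ν₀ : ℝ) * ν * t ^ 2) / (20 * a))) := by
    have hxν₀ : x^ν₀ = Real.exp (-((ν₀ : ℝ) * ν * t ^ 2) / (20 * a)) := (hEm ν₀).symm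
    have h1xpos : 0 < 1 - x := by
      have := div_pos hc0 (by linarith : (0:ℝ) < 1 + c)
      linarith [h1x]
    calc 2 * (ν.choose a : ℝ) * (x^ν₀ / (1 - x))
        = (ν.choose a : ℝ) * ((2 / (1 - x)) * x^ν₀) := by ring
      _ ≤ (ν.choose a : ℝ) * ((80 * Real.sqrt ν / t^2) * x^ν₀) := by
          apply mul_le_mul_of_nonneg_left _ (Nat.cast_nonneg _)
          apply mul_le_mul_of_nonneg_right hfrac (le_of_lt (pow_pos hx0 _))
      _ = (ν.choose a : ℝ) * (80 * Real.sqrt ν / t ^ 2 *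
          Real.exp (-((ν₀ : ℝ) * ν * t ^ 2) / (20 * a))) := by rw [hxν₀]
  exact le_trans hchain hfin

end Main

lemma sum_toNat_eq_card (b : Fin ν → Bool) :
    ∑ i, (b i).toNat = (Finset.univ.filter (fun i => b i = true)).card := by
  rw [Finset.card_filter]
  apply Finset.sum_congr rfl
  intro i _
  cases h : b i <;> simp [h]

end CB

open CB

/-- The Coins and Buckets game with parameters `(a, ν, ν₀)`: `ν` coins are placed one at a
time, coin `i` landing in bucket `A` exactly when `i ∈ I`, where `I` is a uniformly random
`a`-element subset of `{1, …, ν}`; before coin `i` is placed, Decider, who has seen the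
placements of coins `1, …, i-1` but not that of coin `i`, chooses via `s i` whether coin
`i` is heads (`H i = true`). If `h` is the number of heads and `h_A` the number of heads
landing in bucket `A`, then for `a ≤ ν/2`, `ν₀ ≤ ν` and `0 < t < a/ν`,
`P[(h ≥ ν₀) ∧ |h_A - a h/ν| ≥ t h] ≤ (80 √ν / t²) exp(-ν₀ ν t² / (20 a))`. -/
theorem coins_and_buckets {Ω : Type*} [MeasurableSpace Ω] (μ : Measure Ω)
    [IsProbabilityMeasure μ] (a ν ν₀ : ℕ) (ha : 0 < a) (hν₀pos : 0 < ν₀)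
    (ha2 : 2 * a ≤ ν) (hν₀ : ν₀ ≤ ν)
    (I : Ω → Finset (Fin ν))
    (hcard : ∀ ω, (I ω).card = a)
    (hunif : ∀ S : Finset (Fin ν), S.card = a →
      μ {ω | I ω = S} = ((ν.choose a : ENNReal))⁻¹)
    (s : (i : Fin ν) → (Fin (i : ℕ) → Bool) → Bool)
    (H : Fin ν → Ω → Bool)
    (hH : ∀ (i : Fin ν) (ω : Ω),
      H i ω = s i (fun j => decide ((⟨j, j.isLt.trans i.isLt⟩ : Fin ν) ∈ I ω)))
    (t : ℝ) (ht : 0 < t) (ht' : t < (a : ℝ) / ν) :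
    μ {ω | ν₀ ≤ ∑ i, (H i ω).toNat ∧
        t * ((∑ i, (H i ω).toNat : ℕ) : ℝ) ≤
          |((∑ i, (H i ω && decide (i ∈ I ω)).toNat : ℕ) : ℝ) -
            (a : ℝ) * ((∑ i, (H i ω).toNat : ℕ) : ℝ) / ν|} ≤
      ENNReal.ofReal (80 * Real.sqrt ν / t ^ 2 *
        Real.exp (-((ν₀ : ℝ) * ν * t ^ 2) / (20 * a))) := by
  classical
  have hν : 0 < ν := by omega
  set 𝒜 := Finset.powersetCard a (Finset.univ : Finset (Fin ν)) with h𝒜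
  set BadF := 𝒜.filter
      (fun S => ν₀ ≤ (Sel (Hd s) S).card ∧
        t * ((Sel (Hd s) S).card : ℝ) ≤
          |(((Sel (Hd s) S).filter (· ∈ S)).card : ℝ)
            - (a : ℝ) * ((Sel (Hd s) S).card : ℝ) / ν|) with hBadF
  -- pointwise identities
  have hHd : ∀ (ω : Ω) (i : Fin ν), H i ω = Hd s (I ω) i := fun ω i => hH i ω
  have hsum1 : ∀ ω, ∑ i, (H i ω).toNat = (Sel (Hd s) (I ω)).card := by
    intro ω
    have h1 : ∀ i, (H i ω).toNat = (Hd s (I ω) i).toNat := fun i => by rw [hHd ω i]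
    rw [Finset.sum_congr rfl (fun i _ => h1 i), sum_toNat_eq_card]
    rfl
  have hsum2 : ∀ ω, ∑ i, (H i ω && decide (i ∈ I ω)).toNat
      = ((Sel (Hd s) (I ω)).filter (· ∈ I ω)).card := by
    intro ω
    have h1 : ∀ i, (H i ω && decide (i ∈ I ω)).toNat
        = (Hd s (I ω) i && decide (i ∈ I ω)).toNat := fun i => by rw [hHd ω i]
    rw [Finset.sum_congr rfl (fun i _ => h1 i), sum_toNat_eq_card]
    have h2 : (Sel (Hd s) (I ω)).filter (· ∈ I ω)
        = Finset.univ.filter (fun i => (Hd s (I ω) i && decide (i ∈ I ω)) = true) := by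
      rw [Sel, Finset.filter_filter]
      apply Finset.filter_congr
      intro i _
      simp
    rw [h2]
  -- event subset of union over bad sets
  have hsubset : {ω | ν₀ ≤ ∑ i, (H i ω).toNat ∧
        t * ((∑ i, (H i ω).toNat : ℕ) : ℝ) ≤
          |((∑ i, (H i ω && decide (i ∈ I ω)).toNat : ℕ) : ℝ) -
            (a : ℝ) * ((∑ i, (H i ω).toNat : ℕ) : ℝ) / ν|}
      ⊆ ⋃ S ∈ BadF, {ω | I ω = S} := by
    intro ω hω
    simp only [Set.mem_setOf_eq] at hω
    obtain ⟨h1, h2⟩ := hω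
    rw [hsum1 ω] at h1 h2
    rw [hsum2 ω] at h2
    have hmem : I ω ∈ BadF := by
      rw [hBadF, Finset.mem_filter]
      exact ⟨Finset.mem_powersetCard_univ.2 (hcard ω), h1, h2⟩
    exact Set.mem_biUnion hmem rfl
  have hCν : 0 < ν.choose a := Nat.choose_pos (by omega)
  have hCνR : (0:ℝ) < (ν.choose a : ℝ) := by exact_mod_cast hCν
  set R : ℝ := 80 * Real.sqrt ν / t ^ 2 *
        Real.exp (-((ν₀ : ℝ) * ν * t ^ 2) / (20 * a)) with hR
  have hR0 : 0 ≤ R := by positivity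
  have hcount : (BadF.card : ℝ) ≤ (ν.choose a : ℝ) * R :=
    count_bad s a ν₀ t ha hν₀pos ha2 hν₀ ht ht'
  calc μ {ω | ν₀ ≤ ∑ i, (H i ω).toNat ∧
        t * ((∑ i, (H i ω).toNat : ℕ) : ℝ) ≤
          |((∑ i, (H i ω && decide (i ∈ I ω)).toNat : ℕ) : ℝ) -
            (a : ℝ) * ((∑ i, (H i ω).toNat : ℕ) : ℝ) / ν|}
      ≤ μ (⋃ S ∈ BadF, {ω | I ω = S}) := MeasureTheory.measure_mono hsubset
    _ ≤ ∑ S ∈ BadF, μ {ω | I ω = S} := MeasureTheory.measure_biUnion_finset_le _ _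
    _ = ∑ _S ∈ BadF, ((ν.choose a : ENNReal))⁻¹ := by
        apply Finset.sum_congr rfl
        intro S hS
        apply hunif
        rw [hBadF, Finset.mem_filter] at hS
        exact Finset.mem_powersetCard_univ.1 hS.1
    _ = (BadF.card : ENNReal) * ((ν.choose a : ENNReal))⁻¹ := by
        rw [Finset.sum_const, nsmul_eq_mul]
    _ ≤ ENNReal.ofReal R := by
        have hb : (BadF.card : ℝ) * ((ν.choose a : ℝ))⁻¹ ≤ R := by
          rw [← div_eq_mul_inv, div_le_iff₀ hCνR]
          linarith [hcount]
        calc (BadF.card : ENNReal) * ((ν.choose a : ENNReal))⁻¹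
            = ENNReal.ofReal (BadF.card : ℝ) * (ENNReal.ofReal ((ν.choose a : ℝ)))⁻¹ := by
              rw [ENNReal.ofReal_natCast, ENNReal.ofReal_natCast]
          _ = ENNReal.ofReal (BadF.card : ℝ) * ENNReal.ofReal (((ν.choose a : ℝ))⁻¹) := by
              rw [ENNReal.ofReal_inv_of_pos hCνR]
          _ = ENNReal.ofReal ((BadF.card : ℝ) * ((ν.choose a : ℝ))⁻¹) := by
              rw [← ENNReal.ofReal_mul (Nat.cast_nonneg _)]
          _ ≤ ENNReal.ofReal R := ENNReal.ofReal_le_ofReal hb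
end
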